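/- arXiv:1001.0559 — 10 statements merged into one kernel-verified Lean document; each statement's English description precedes it below -/
import Mathlib

section
/- Let f be holomorphic on an open neighborhood of a closed disk in ℂ and not constant on that disk. If the maximum of |f| over the closed disk is attained at a boundary point α, then f'(α) ≠ 0. -/
/-!
If `f'(α) = 0`, then near `α` we have `f z = f α + (z - α) ^ n * g z` with `n ≥ 2` and
`g α ≠ 0`. The directions pointing strictly into the disk at `α` form an open half-plane,
which `v ↦ v ^ n` maps onto all of `ℂ \ {0}` because `n ≥ 2`. Hence some inward direction `v`
has `Re (conj (f α) * g α * v ^ n) > 0`, and moving from `α` a little along `v` stays in the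
disk and strictly increases `‖f‖`.
-/

open Complex Metric Filter Topology Real
open scoped InnerProductSpace ComplexConjugate

theorem eventually_add_smul_mem_closedBall {E : Type*} [NormedAddCommGroup E]
    [InnerProductSpace ℝ E] {c x v : E} (hv : 0 < ⟪v, c - x⟫_ℝ) :
    ∀ᶠ t : ℝ in 𝓝[>] 0, x + t • v ∈ closedBall c (dist x c) := by
  have hv0 : 0 < ‖v‖ ^ 2 := by
    have : v ≠ 0 := by rintro rfl; simp at hv
    positivity
  filter_upwards [Ioo_mem_nhdsGT (div_pos (mul_pos two_pos hv) hv0)] with t ⟨ht0, ht⟩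
  rw [lt_div_iff₀ hv0] at ht
  have hsq : ‖t • v - (c - x)‖ ^ 2 ≤ ‖c - x‖ ^ 2 := by
    rw [norm_sub_sq_real, norm_smul, inner_smul_left, Real.norm_eq_abs, abs_of_pos ht0]
    simp only [conj_trivial]
    nlinarith
  rw [mem_closedBall, dist_eq_norm, dist_comm, dist_eq_norm,
    show x + t • v - c = t • v - (c - x) by abel]
  exact (pow_le_pow_iff_left₀ (norm_nonneg _) (norm_nonneg _) two_ne_zero).mp hsq

theorem Complex.re_mul_exp_mul_I (w : ℂ) (x : ℝ) :
    (w * exp (x * I)).re = ‖w‖ * Real.cos (arg w + x) := by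
  conv_lhs => rw [← norm_mul_exp_arg_mul_I w]
  rw [mul_assoc, ← exp_add, ← add_mul, ← ofReal_add, re_ofReal_mul, exp_ofReal_mul_I_re]

theorem Complex.exists_inner_pos_and_re_mul_pow_pos {n : ℕ} (hn : 2 ≤ n) {a u : ℂ}
    (ha : a ≠ 0) (hu : u ≠ 0) : ∃ v : ℂ, 0 < ⟪v, u⟫_ℝ ∧ 0 < (a * v ^ n).re := by
  -- `v := u * exp (θ * I)` is within `π / 3` of `u`, and `a * v ^ n` has argument `φ / 3`.
  set φ := arg (a * u ^ n)
  set θ : ℝ := -(2 * φ) / (3 * n)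
  have hn' : (2 : ℝ) ≤ n := by exact_mod_cast hn
  have hφ : |φ| ≤ π := abs_arg_le_pi _
  have hθ : |θ| ≤ π / 3 := by
    rw [abs_div, abs_neg, abs_mul, abs_of_pos (by positivity : (0 : ℝ) < 3 * n), abs_two,
      div_le_iff₀ (by positivity)]
    nlinarith [mul_le_mul_of_nonneg_left hn' pi_pos.le]
  have cos_pos {x : ℝ} (hx : |x| ≤ π / 3) : 0 < Real.cos x :=
    Real.cos_pos_of_mem_Ioo (abs_lt.mp (hx.trans_lt (by linarith [pi_pos])))
  refine ⟨u * exp (θ * I), ?_, ?_⟩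
  · rw [real_inner_comm, Complex.inner, mul_right_comm, mul_conj, re_ofReal_mul,
      exp_ofReal_mul_I_re]
    exact mul_pos (normSq_pos.mpr hu) (cos_pos hθ)
  · rw [mul_pow, ← mul_assoc, ← exp_nat_mul, ← mul_assoc, ← ofReal_natCast, ← ofReal_mul,
      re_mul_exp_mul_I]
    refine mul_pos (norm_pos_iff.mpr (mul_ne_zero ha (pow_ne_zero n hu))) (cos_pos ?_)
    have : φ + n * θ = φ / 3 := by simp only [θ]; field_simp; ring
    rw [this, abs_div, abs_of_pos (by norm_num : (0 : ℝ) < 3)]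
    linarith

theorem AnalyticAt.exists_eventuallyEq_add_pow_mul_of_deriv_eq_zero {𝕜 : Type*}
    [NontriviallyNormedField 𝕜] {f : 𝕜 → 𝕜} {z₀ : 𝕜} (hf : AnalyticAt 𝕜 f z₀)
    (hconst : ¬ f =ᶠ[𝓝 z₀] fun _ => f z₀) (hd : deriv f z₀ = 0) :
    ∃ n, 2 ≤ n ∧ ∃ g : 𝕜 → 𝕜, AnalyticAt 𝕜 g z₀ ∧ g z₀ ≠ 0 ∧
      ∀ᶠ z in 𝓝 z₀, f z = f z₀ + (z - z₀) ^ n * g z := by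
  have hsub : ¬ ∀ᶠ z in 𝓝 z₀, f z - f z₀ = 0 := fun h =>
    hconst (h.mono fun _ hz => sub_eq_zero.mp hz)
  obtain ⟨n, g, hg, hg0, hfg⟩ :=
    (hf.sub analyticAt_const).exists_eventuallyEq_pow_smul_nonzero_iff.mpr hsub
  simp only [smul_eq_mul, Pi.sub_apply] at hfg
  refine ⟨n, ?_, g, hg, hg0, hfg.mono fun z hz => by rw [← hz]; ring⟩
  by_contra! hn
  interval_cases n
  · simpa [eq_comm, hg0] using hfg.self_of_nhds
  · have hder : HasDerivAt (fun z => (z - z₀) ^ 1 * g z) (g z₀) z₀ := by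
      have := ((hasDerivAt_id' z₀).sub_const z₀).fun_mul hg.differentiableAt.hasDerivAt
      simp only [sub_self, zero_mul, one_mul, add_zero] at this
      simpa only [pow_one] using this
    have := (hder.congr_of_eventuallyEq hfg).deriv
    rw [deriv_sub_const, hd] at this
    exact hg0 this.symm

theorem eventually_norm_lt_norm_add_smul {f g : ℂ → ℂ} {z₀ v : ℂ} {n : ℕ}
    (hfg : ∀ᶠ z in 𝓝 z₀, f z = f z₀ + (z - z₀) ^ n * g z) (hg : ContinuousAt g z₀)
    (hv : 0 < (conj (f z₀) * g z₀ * v ^ n).re) :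
    ∀ᶠ t : ℝ in 𝓝[>] 0, ‖f z₀‖ < ‖f (z₀ + t • v)‖ := by
  have hpath : Tendsto (fun t : ℝ => z₀ + t • v) (𝓝[>] 0) (𝓝 z₀) := by
    have : Continuous fun t : ℝ => z₀ + t • v := by fun_prop
    simpa using (this.tendsto 0).mono_left nhdsWithin_le_nhds
  have hre : ∀ᶠ t : ℝ in 𝓝[>] 0, 0 < (conj (f z₀) * g (z₀ + t • v) * v ^ n).re :=
    ((continuous_re.tendsto _).comp (((hg.tendsto.comp hpath).const_mul _).mul_const _)).eventually
      (lt_mem_nhds hv)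
  filter_upwards [hpath.eventually hfg, hre, self_mem_nhdsWithin] with t hft hpos (ht : 0 < t)
  have hexpand : (conj (f z₀) * f (z₀ + t • v)).re
      = ‖f z₀‖ ^ 2 + t ^ n * (conj (f z₀) * g (z₀ + t • v) * v ^ n).re := by
    rw [hft, add_sub_cancel_left, real_smul, mul_add, conj_mul', add_re, ← ofReal_pow,
      ofReal_re, ← re_ofReal_mul]
    congr 2
    push_cast
    ring
  have hbound :
      (conj (f z₀) * f (z₀ + t • v)).re ≤ ‖f z₀‖ * ‖f (z₀ + t • v)‖ := by
    simpa using re_le_norm (conj (f z₀) * f (z₀ + t • v))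
  nlinarith [pow_pos ht n, norm_nonneg (f z₀)]

/-- If `f` is holomorphic on an open neighborhood of a closed disk, not constant on the
disk, and `|f|` attains its maximum over the closed disk at a boundary point `α`, then
`f'(α) ≠ 0`. -/
theorem deriv_ne_zero_at_boundary_max
    (c : ℂ) (r : ℝ) (hr : 0 < r) (U : Set ℂ) (hU : IsOpen U)
    (hUc : closedBall c r ⊆ U) (f : ℂ → ℂ) (hf : DifferentiableOn ℂ f U)
    (hnc : ¬ ∃ w : ℂ, ∀ z ∈ closedBall c r, f z = w)
    (α : ℂ) (hα : α ∈ sphere c r)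
    (hmax : ∀ z ∈ closedBall c r, ‖f z‖ ≤ ‖f α‖) :
    deriv f α ≠ 0 := by
  intro hd
  have hαball : α ∈ closedBall c r := sphere_subset_closedBall hα
  have hfa : AnalyticOnNhd ℂ f (closedBall c r) := (hf.analyticOnNhd hU).mono hUc
  have hfα : f α ≠ 0 := fun h0 =>
    hnc ⟨0, fun z hz => norm_le_zero_iff.mp (by simpa [h0] using hmax z hz)⟩
  have hconst : ¬ f =ᶠ[𝓝 α] fun _ => f α := fun h => hnc ⟨f α,
    hfa.eqOn_of_preconnected_of_eventuallyEq analyticOnNhd_const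
      (convex_closedBall c r).isPreconnected hαball h⟩
  obtain ⟨n, hn, g, hg, hgα, hfg⟩ :=
    (hfa α hαball).exists_eventuallyEq_add_pow_mul_of_deriv_eq_zero hconst hd
  have hcα : c - α ≠ 0 := sub_ne_zero.mpr (ne_of_mem_sphere hα hr.ne').symm
  have ha : conj (f α) * g α ≠ 0 := mul_ne_zero (by simpa using hfα) hgα
  obtain ⟨v, hv_in, hv_up⟩ := exists_inner_pos_and_re_mul_pow_pos hn ha hcα
  obtain ⟨t, hmem, hlt⟩ := ((eventually_add_smul_mem_closedBall hv_in).and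
    (eventually_norm_lt_norm_add_smul hfg hg.continuousAt hv_up)).exists
  rw [mem_sphere.mp hα] at hmem
  exact (hmax _ hmem).not_gt hlt
end

section
/- Let f be holomorphic on an open neighborhood of the closed disk {z ∈ ℂ : |z| ≤ r} centered at the origin (r > 0) and not constant on that disk. If the maximum of |f| over the closed disk is attained at a boundary point α (with |α| = r), then the quantity α·f'(α)/f(α) is a positive real number. -/
open Complex Metric

/-!
Rescaling to `g z = f (α z) / f α` gives a self-map of the closed unit disk with `g 1 = 1` and,
by the maximum principle, `‖g 0‖ < 1`; the claim is that `c = g'(1)` is a positive real.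
Along the circle, `‖g (exp (θ I))‖²` is maximal at `θ = 0`, so its derivative `-2 Im c` vanishes.
Along the radius, the Schwarz lemma for `g` followed by the disk automorphism sending `g 0` to `0`
gives `1 - ‖g t‖² ≥ K (1 - t²)` with `K = (1 - ‖g 0‖) / (1 + ‖g 0‖) > 0`, so
`Re g t ≤ 1 - K (1 - t) / 2` and hence `Re c ≥ K / 2`.
-/

open Set Filter Topology ComplexConjugate

noncomputable def diskMobius (a z : ℂ) : ℂ := (z - a) / (1 - conj a * z)

@[simp]
lemma diskMobius_self (a : ℂ) : diskMobius a a = 0 := by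
  simp [diskMobius]

lemma normSq_one_sub_conj_mul_sub_normSq_sub (a z : ℂ) :
    normSq (1 - conj a * z) - normSq (z - a) = (1 - normSq a) * (1 - normSq z) := by
  simp only [normSq_apply, sub_re, sub_im, mul_re, mul_im, conj_re, conj_im, one_re, one_im]
  ring

lemma one_sub_norm_le_norm_one_sub_conj_mul {a z : ℂ} (hz : ‖z‖ ≤ 1) :
    1 - ‖a‖ ≤ ‖1 - conj a * z‖ := by
  have : ‖conj a * z‖ ≤ ‖a‖ := by
    simpa [norm_mul] using mul_le_of_le_one_right (norm_nonneg a) hz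
  linarith [norm_sub_norm_le (1 : ℂ) (conj a * z), norm_one (α := ℂ)]

lemma one_sub_conj_mul_ne_zero {a z : ℂ} (ha : ‖a‖ < 1) (hz : ‖z‖ ≤ 1) :
    1 - conj a * z ≠ 0 :=
  norm_pos_iff.mp <| (sub_pos.mpr ha).trans_le (one_sub_norm_le_norm_one_sub_conj_mul hz)

lemma one_sub_sq_norm_diskMobius {a z : ℂ} (ha : ‖a‖ < 1) (hz : ‖z‖ ≤ 1) :
    ‖1 - conj a * z‖ ^ 2 * (1 - ‖diskMobius a z‖ ^ 2) = (1 - ‖a‖ ^ 2) * (1 - ‖z‖ ^ 2) := by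
  have hD := one_sub_conj_mul_ne_zero ha hz
  rw [diskMobius, norm_div, div_pow, mul_one_sub, mul_div_cancel₀ _ (by positivity)]
  simp only [Complex.sq_norm]
  linear_combination normSq_one_sub_conj_mul_sub_normSq_sub a z

lemma norm_diskMobius_le_one {a z : ℂ} (ha : ‖a‖ < 1) (hz : ‖z‖ ≤ 1) :
    ‖diskMobius a z‖ ≤ 1 := by
  have h := one_sub_sq_norm_diskMobius ha hz
  have hD := norm_pos_iff.mpr (one_sub_conj_mul_ne_zero ha hz)
  have : 0 ≤ 1 - ‖diskMobius a z‖ ^ 2 := by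
    refine nonneg_of_mul_nonneg_right (a := ‖1 - conj a * z‖ ^ 2) ?_ (by positivity)
    rw [h]
    exact mul_nonneg (by nlinarith [norm_nonneg a]) (by nlinarith [norm_nonneg z])
  nlinarith [norm_nonneg (diskMobius a z)]

lemma mul_one_sub_sq_norm_diskMobius_le {a z : ℂ} (ha : ‖a‖ < 1) (hz : ‖z‖ ≤ 1) :
    (1 - ‖a‖) / (1 + ‖a‖) * (1 - ‖diskMobius a z‖ ^ 2) ≤ 1 - ‖z‖ ^ 2 := by
  have h := one_sub_sq_norm_diskMobius ha hz
  have hD := one_sub_norm_le_norm_one_sub_conj_mul (a := a) hz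
  have hφ := norm_diskMobius_le_one ha hz
  have ha0 := norm_nonneg a
  rw [div_mul_eq_mul_div, div_le_iff₀ (by positivity)]
  have hD2 : (1 - ‖a‖) ^ 2 * (1 - ‖diskMobius a z‖ ^ 2) ≤
      ‖1 - conj a * z‖ ^ 2 * (1 - ‖diskMobius a z‖ ^ 2) :=
    mul_le_mul_of_nonneg_right (pow_le_pow_left₀ (by linarith) hD 2)
      (by nlinarith [norm_nonneg (diskMobius a z)])
  nlinarith

lemma mul_one_sub_sq_norm_le_of_mapsTo_ball {g : ℂ → ℂ} (hd : DifferentiableOn ℂ g (ball 0 1))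
    (hmaps : MapsTo g (ball 0 1) (closedBall 0 1)) (h0 : ‖g 0‖ < 1) {z : ℂ} (hz : ‖z‖ < 1) :
    (1 - ‖g 0‖) / (1 + ‖g 0‖) * (1 - ‖z‖ ^ 2) ≤ 1 - ‖g z‖ ^ 2 := by
  have hg : ∀ w ∈ ball (0 : ℂ) 1, ‖g w‖ ≤ 1 := fun w hw => mem_closedBall_zero_iff.mp (hmaps hw)
  have hφd : DifferentiableOn ℂ (fun w => diskMobius (g 0) (g w)) (ball 0 1) :=
    (hd.sub_const _).div ((differentiableOn_const _).sub ((differentiableOn_const _).mul hd))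
      fun w hw => one_sub_conj_mul_ne_zero h0 (hg w hw)
  have hschwarz : ‖diskMobius (g 0) (g z)‖ ≤ ‖z‖ :=
    Complex.norm_le_norm_of_mapsTo_ball hφd
      (fun w hw => mem_closedBall_zero_iff.mpr (norm_diskMobius_le_one h0 (hg w hw)))
      (diskMobius_self _) hz
  calc (1 - ‖g 0‖) / (1 + ‖g 0‖) * (1 - ‖z‖ ^ 2)
      ≤ (1 - ‖g 0‖) / (1 + ‖g 0‖) * (1 - ‖diskMobius (g 0) (g z)‖ ^ 2) := by
        gcongr
    _ ≤ 1 - ‖g z‖ ^ 2 :=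
        mul_one_sub_sq_norm_diskMobius_le h0 (hg z (mem_ball_zero_iff.mpr hz))

lemma le_of_hasDerivAt_of_forall_le_slope {h : ℝ → ℝ} {d k x y : ℝ} (hd : HasDerivAt h d x)
    (hy : y < x) (hk : ∀ t ∈ Ioo y x, k ≤ slope h x t) : k ≤ d :=
  ge_of_tendsto (hd.tendsto_slope.mono_left (nhdsLT_le_nhdsNE x))
    (eventually_of_mem (Ioo_mem_nhdsLT hy) hk)

lemma im_eq_zero_of_hasDerivAt_of_mapsTo_sphere {g : ℂ → ℂ} {c : ℂ}
    (hmaps : MapsTo g (sphere 0 1) (closedBall 0 1)) (h1 : g 1 = 1) (hc : HasDerivAt g c 1) :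
    c.im = 0 := by
  have hγ : circleMap 0 1 0 = 1 := by simp [circleMap]
  have hderiv : HasDerivAt (fun θ => ‖g (circleMap 0 1 θ)‖ ^ 2) (-2 * c.im) 0 := by
    have := ((hγ ▸ hc).comp 0 (hasDerivAt_circleMap 0 1 0)).norm_sq
    simpa [hγ, h1, Complex.inner] using this
  have hmax : IsLocalMax (fun θ => ‖g (circleMap 0 1 θ)‖ ^ 2) 0 :=
    Eventually.of_forall fun θ => by
      simpa [hγ, h1] using
        mem_closedBall_zero_iff.mp (hmaps (circleMap_mem_sphere 0 zero_le_one θ))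
  simpa using hmax.hasDerivAt_eq_zero hderiv

lemma re_pos_of_hasDerivAt_of_mapsTo_ball {g : ℂ → ℂ} {c : ℂ}
    (hd : DifferentiableOn ℂ g (ball 0 1)) (hmaps : MapsTo g (ball 0 1) (closedBall 0 1))
    (h0 : ‖g 0‖ < 1) (h1 : g 1 = 1) (hc : HasDerivAt g c 1) : 0 < c.re := by
  set K := (1 - ‖g 0‖) / (1 + ‖g 0‖)
  have hK : 0 < K := div_pos (sub_pos.mpr h0) (by positivity)
  have hslope : ∀ t ∈ Ioo (0 : ℝ) 1, K / 2 ≤ slope (fun t : ℝ => (g t).re) 1 t := by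
    rintro t ⟨ht0, ht1⟩
    have ht : ‖(t : ℂ)‖ < 1 := by simpa [abs_of_pos ht0]
    have hpick := mul_one_sub_sq_norm_le_of_mapsTo_ball hd hmaps h0 ht
    have hgt : ‖g t‖ ≤ 1 := mem_closedBall_zero_iff.mp (hmaps (mem_ball_zero_iff.mpr ht))
    have hre : (g t).re ≤ ‖g t‖ := re_le_norm _
    rw [norm_real, Real.norm_of_nonneg ht0.le] at hpick
    rw [slope_def_field, ofReal_one, h1, one_re, le_div_iff_of_neg (by linarith)]
    nlinarith [mul_nonneg (sub_nonneg.mpr hgt) (sub_nonneg.mpr hgt), mul_pos hK ht0]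
  have hc' : HasDerivAt g c ((1 : ℝ) : ℂ) := by simpa using hc
  linarith [le_of_hasDerivAt_of_forall_le_slope hc'.real_of_complex zero_lt_one hslope]

lemma norm_center_lt_of_not_const {E F : Type*} [NormedAddCommGroup E] [NormedSpace ℂ E]
    [NormedAddCommGroup F] [NormedSpace ℂ F] [StrictConvexSpace ℝ F] {f : E → F} {c : E} {r M : ℝ}
    (hd : DiffContOnCl ℂ f (ball c r)) (hr : 0 ≤ r) (hM : ∀ z ∈ closedBall c r, ‖f z‖ ≤ M)
    (hnc : ¬ ∃ w, ∀ z ∈ closedBall c r, f z = w) : ‖f c‖ < M := by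
  refine (hM c (mem_closedBall_self hr)).lt_of_ne fun hc => hnc ⟨f c, fun z hz => ?_⟩
  exact Complex.eqOn_closedBall_of_isMaxOn_norm hd
    (fun w hw => (hM w (ball_subset_closedBall hw)).trans_eq hc.symm) hz


/-- If `f` is holomorphic on a neighborhood of the closed disk of radius `r` about `0`,
not constant on the disk, and `|f|` attains its maximum at the boundary point `α`, then
`α * f'(α) / f(α)` is a positive real number. -/
theorem boundary_max_ratio_pos_real
    (r : ℝ) (hr : 0 < r) (U : Set ℂ) (hU : IsOpen U)
    (hUc : closedBall (0 : ℂ) r ⊆ U) (f : ℂ → ℂ) (hf : DifferentiableOn ℂ f U)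
    (hnc : ¬ ∃ w : ℂ, ∀ z ∈ closedBall (0 : ℂ) r, f z = w)
    (α : ℂ) (hα : α ∈ sphere (0 : ℂ) r)
    (hmax : ∀ z ∈ closedBall (0 : ℂ) r, ‖f z‖ ≤ ‖f α‖) :
    (α * deriv f α / f α).im = 0 ∧ 0 < (α * deriv f α / f α).re := by
  have hαr : ‖α‖ = r := by simpa using hα
  have hscale : MapsTo (α * ·) (closedBall 0 1) (closedBall 0 r) := fun z hz => by
    simpa [norm_mul, hαr] using mul_le_of_le_one_right hr.le (mem_closedBall_zero_iff.mp hz)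
  have hfα : f α ≠ 0 := fun h =>
    hnc ⟨0, fun z hz => norm_le_zero_iff.mp (by simpa [h] using hmax z hz)⟩
  have hf0 : ‖f 0‖ < ‖f α‖ :=
    norm_center_lt_of_not_const (hf.diffContOnCl_ball hUc) hr.le hmax hnc
  set g : ℂ → ℂ := fun z => f (α * z) / f α
  have hgd : DifferentiableOn ℂ g ((α * ·) ⁻¹' U) :=
    (hf.comp (differentiableOn_id.const_mul α) (mapsTo_preimage _ _)).div_const _
  have hgmaps : MapsTo g (closedBall 0 1) (closedBall 0 1) := fun z hz => by
    simpa [g, norm_div, div_le_one (norm_pos_iff.mpr hfα)] using hmax _ (hscale hz)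
  have hg : HasDerivAt g (α * deriv f α / f α) 1 := by
    have hαU : U ∈ 𝓝 (α * 1) := hU.mem_nhds (hUc (by simpa using hα.le))
    simpa [mul_comm] using (((hf.differentiableAt hαU).hasDerivAt).comp 1
      ((hasDerivAt_id 1).const_mul α)).div_const (f α)
  have hg1 : g 1 = 1 := by simp [g, hfα]
  have hg0 : ‖g 0‖ < 1 := by simpa [g, norm_div, div_lt_one (norm_pos_iff.mpr hfα)] using hf0
  refine ⟨im_eq_zero_of_hasDerivAt_of_mapsTo_sphere
    (hgmaps.mono_left sphere_subset_closedBall) hg1 hg, re_pos_of_hasDerivAt_of_mapsTo_ball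
    (hgd.mono fun z hz => hUc (hscale (ball_subset_closedBall hz)))
    (hgmaps.mono_left ball_subset_closedBall) hg0 hg1 hg⟩
end

section
/- Let f be holomorphic on an open set containing the upper half-plane ℍ and the point 0, with f(z) ∈ ℍ for all z ∈ ℍ and f(0) = 0, and suppose f is not constant. Then f'(0) is a positive real number (in particular f'(0) ≠ 0). -/
/-!
Near `0` write `f z = z ^ n * g z` with `g 0 ≠ 0`; the order `n` is finite and positive because `f`
takes values in `ℍ` yet vanishes at `0`. Letting `z → 0` inside `ℍ` shows that
`w ^ n * g 0` lies in the closed upper half-plane for every `w` in the closed upper half-plane.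
For `n ≥ 2` the `n`-th powers of the closed upper half-plane contain `1, I, -1, -I`, forcing
`g 0 = 0`; for `n = 1` the choices `w = 1, -1, I` make `f'(0) = g 0` real and positive.
-/

open Complex Filter Topology

lemma frequently_im_pos_nhds_zero : ∃ᶠ z in 𝓝 (0 : ℂ), 0 < z.im :=
  mem_closure_iff_frequently.mp (show (0 : ℂ) ∈ closure {z : ℂ | 0 < z.im} by simp)

lemma im_pow_mul_nonneg_of_eventually_im_pos {g : ℂ → ℂ} (hg : ContinuousAt g 0) {n : ℕ}
    (hpos : ∀ᶠ z in 𝓝 0, 0 < z.im → 0 < (z ^ n * g z).im) {w : ℂ} (hw : 0 ≤ w.im) :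
    0 ≤ (w ^ n * g 0).im := by
  -- approach `0` along `r * (w + r I)`, which lies in `ℍ` for `r > 0` even when `w` is real
  set v : ℝ → ℂ := fun r => w + r * I
  have hv : Tendsto v (𝓝[>] 0) (𝓝 w) := by
    simpa [v] using ((by fun_prop : Continuous v).tendsto 0).mono_left nhdsWithin_le_nhds
  have hz : Tendsto (fun r : ℝ => (r : ℂ) * v r) (𝓝[>] 0) (𝓝 0) := by
    simpa using ((by fun_prop : Continuous fun r : ℝ => (r : ℂ) * v r).tendsto 0).mono_left
      nhdsWithin_le_nhds
  have hlim : Tendsto (fun r : ℝ => (v r ^ n * g (r * v r)).im) (𝓝[>] 0)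
      (𝓝 (w ^ n * g 0).im) :=
    (continuous_im.tendsto _).comp (((hv.pow n).mul (hg.tendsto.comp hz)))
  refine ge_of_tendsto hlim ?_
  filter_upwards [hz.eventually hpos, self_mem_nhdsWithin] with r hr (hr0 : 0 < r)
  have him : 0 < ((r : ℂ) * v r).im := by
    simp only [v, im_ofReal_mul, add_im, mul_I_im, ofReal_re]
    positivity
  have := hr him
  rw [mul_pow, mul_assoc, ← ofReal_pow, im_ofReal_mul] at this
  exact (pos_of_mul_pos_right this (by positivity)).le

lemma exists_im_nonneg_pow_eq_exp {n : ℕ} (hn : n ≠ 0) {t : ℝ} (ht0 : 0 ≤ t)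
    (ht : t ≤ n * Real.pi) : ∃ w : ℂ, 0 ≤ w.im ∧ w ^ n = exp (t * I) := by
  have hn' : (0 : ℝ) < n := by positivity
  refine ⟨exp ((t / n : ℝ) * I), ?_, ?_⟩
  · rw [exp_ofReal_mul_I_im]
    exact Real.sin_nonneg_of_nonneg_of_le_pi (by positivity) (by rwa [div_le_iff₀' hn'])
  · rw [← exp_nat_mul]
    congr 1
    push_cast
    field_simp

lemma im_exp_mul_I_mul (t : ℝ) (c : ℂ) :
    (exp (t * I) * c).im = Real.sin t * c.re + Real.cos t * c.im := by
  simp only [mul_im, exp_ofReal_mul_I_re, exp_ofReal_mul_I_im]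
  ring

lemma eq_zero_of_forall_im_pow_mul_nonneg {n : ℕ} (hn : 2 ≤ n) {c : ℂ}
    (h : ∀ w : ℂ, 0 ≤ w.im → 0 ≤ (w ^ n * c).im) : c = 0 := by
  have hexp : ∀ t : ℝ, 0 ≤ t → t ≤ 2 * Real.pi →
      0 ≤ Real.sin t * c.re + Real.cos t * c.im := by
    intro t ht0 ht
    have hn' : (2 : ℝ) ≤ n := by exact_mod_cast hn
    obtain ⟨w, hw, hwn⟩ :=
      exists_im_nonneg_pow_eq_exp (n := n) (by omega) ht0 (ht.trans (by nlinarith [Real.pi_pos]))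
    rw [← im_exp_mul_I_mul, ← hwn]
    exact h w hw
  have hpi := Real.pi_pos
  have h1 := hexp 0 le_rfl (by positivity)
  have hI := hexp (Real.pi / 2) (by positivity) (by linarith)
  have hm1 := hexp Real.pi hpi.le (by linarith)
  have hmI := hexp (Real.pi / 2 + Real.pi) (by positivity) (by linarith)
  simp only [Real.sin_zero, Real.cos_zero, Real.sin_pi_div_two, Real.cos_pi_div_two,
    Real.sin_pi, Real.cos_pi, Real.sin_add_pi, Real.cos_add_pi, zero_mul, one_mul, neg_mul,
    neg_zero, add_zero, zero_add] at h1 hI hm1 hmI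
  apply Complex.ext <;> simp only [zero_re, zero_im] <;> linarith

lemma im_eq_zero_and_re_nonneg_of_forall_im_mul_nonneg {c : ℂ}
    (h : ∀ w : ℂ, 0 ≤ w.im → 0 ≤ (w * c).im) : c.im = 0 ∧ 0 ≤ c.re := by
  have h1 := h 1 (by simp)
  have hm1 := h (-1) (by simp)
  have hI := h I (by simp)
  simp only [one_mul, neg_mul, neg_im, mul_im, I_re, I_im, zero_mul, zero_add] at h1 hm1 hI
  exact ⟨by linarith, hI⟩

theorem deriv_pos_at_boundary_fixed_point_general
    (U : Set ℂ) (hU : IsOpen U) (h0U : (0 : ℂ) ∈ U)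
    (f : ℂ → ℂ) (hf : DifferentiableOn ℂ f U)
    (hmap : ∀ z : ℂ, 0 < z.im → 0 < (f z).im)
    (hfix : f 0 = 0) :
    (deriv f 0).im = 0 ∧ 0 < (deriv f 0).re := by
  have hnz : ¬∀ᶠ z in 𝓝 (0 : ℂ), f z = 0 := fun h =>
    let ⟨z, hz, hfz⟩ := (frequently_im_pos_nhds_zero.and_eventually h).exists
    (hmap z hz).ne' (by rw [hfz, zero_im])
  obtain ⟨n, g, hg, hg0, hfg⟩ :=
    (hf.analyticAt (hU.mem_nhds h0U)).exists_eventuallyEq_pow_smul_nonzero_iff.mpr hnz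
  simp only [sub_zero, smul_eq_mul] at hfg
  have hn0 : n ≠ 0 := by
    rintro rfl
    exact hg0 (by simpa [hfix] using hfg.self_of_nhds.symm)
  have hnonneg : ∀ w : ℂ, 0 ≤ w.im → 0 ≤ (w ^ n * g 0).im := fun w =>
    im_pow_mul_nonneg_of_eventually_im_pos hg.continuousAt
      (by filter_upwards [hfg] with z hz using hz ▸ hmap z)
  obtain rfl : n = 1 := by
    by_contra hn1
    exact hg0 (eq_zero_of_forall_im_pow_mul_nonneg (by omega) hnonneg)
  have hderiv : deriv f 0 = g 0 := by
    have hfz : f =ᶠ[𝓝 0] fun z => z * g z := hfg.mono fun z hz => by rw [hz, pow_one]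
    have hd : HasDerivAt (fun z => z * g z) (1 * g 0 + 0 * deriv g 0) 0 :=
      (hasDerivAt_id 0).mul hg.differentiableAt.hasDerivAt
    rw [hfz.deriv_eq, hd.deriv, one_mul, zero_mul, add_zero]
  obtain ⟨him, hre⟩ := im_eq_zero_and_re_nonneg_of_forall_im_mul_nonneg (by simpa using hnonneg)
  rw [hderiv]
  exact ⟨him, hre.lt_of_ne fun h => hg0 (Complex.ext h.symm him)⟩

/-- A nonconstant holomorphic self-map of the upper half-plane that extends
holomorphically past the boundary fixed point `0` has positive real derivative there. -/
theorem deriv_pos_at_boundary_fixed_point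
    (U : Set ℂ) (hU : IsOpen U) (hUH : {z : ℂ | 0 < z.im} ⊆ U) (h0U : (0 : ℂ) ∈ U)
    (f : ℂ → ℂ) (hf : DifferentiableOn ℂ f U)
    (hmap : ∀ z : ℂ, 0 < z.im → 0 < (f z).im)
    (hfix : f 0 = 0)
    (hnc : ¬ ∃ w : ℂ, ∀ z : ℂ, 0 < z.im → f z = w) :
    (deriv f 0).im = 0 ∧ 0 < (deriv f 0).re :=
  deriv_pos_at_boundary_fixed_point_general U hU h0U f hf hmap hfix
end

section
/- (Julia's fundamental inequality) Let f be holomorphic on an open set containing the upper half-plane ℍ and the point 0, with f(z) ∈ ℍ for all z ∈ ℍ, f(0) = 0, and f not constant. Then for every z ∈ ℍ: f'(0) · Im(f(z))/|f(z)|² ≥ Im(z)/|z|², where f'(0) is a positive real number. -/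
/-!
Conjugating by Cayley transforms turns the Schwarz lemma into the Schwarz–Pick inequality on `ℍ`:
`Im w Im z / |w - z̄|² = (1 - |cayley z w|²) / 4` can only increase under `f`. Taking `w = i t` and
letting `t → 0⁺`, `Im f(i t) / t → Re f'(0)` and `f(i t) → f(0) = 0`, which gives Julia's inequality;
at `z = i` it forces `Re f'(0) > 0`. By continuity `Im f ≥ 0` on the real axis near `0`, so
`t ↦ Im f(t)` has a local minimum at `0` and `Im f'(0) = 0`.
-/

open Complex ComplexConjugate Set Filter Topology Metric

local notation "ℍ" => Set.ofPred fun z : ℂ => 0 < Complex.im z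

noncomputable section

def cayley (z w : ℂ) : ℂ := (w - z) / (w - conj z)

def cayleyInv (z u : ℂ) : ℂ := (z - conj z * u) / (1 - u)

lemma norm_sub_conj_sq (p q : ℂ) : ‖p - conj q‖ ^ 2 = ‖p - q‖ ^ 2 + 4 * p.im * q.im := by
  simp only [← normSq_eq_norm_sq, normSq_apply, sub_re, sub_im, conj_re, conj_im]
  ring

lemma sub_conj_ne_zero {p q : ℂ} (hp : 0 < p.im) (hq : 0 < q.im) : p - conj q ≠ 0 := by
  intro h
  have := congrArg im h
  simp only [sub_im, conj_im, sub_neg_eq_add, zero_im] at this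
  linarith

lemma one_sub_norm_cayley_sq {z w : ℂ} (hz : 0 < z.im) (hw : 0 < w.im) :
    1 - ‖cayley z w‖ ^ 2 = 4 * (w.im * z.im / ‖w - conj z‖ ^ 2) := by
  have hne : ‖w - conj z‖ ^ 2 ≠ 0 := by simp [sub_conj_ne_zero hw hz]
  rw [cayley, norm_div, div_pow, mul_div_assoc', eq_div_iff hne, sub_mul, div_mul_cancel₀ _ hne,
    norm_sub_conj_sq]
  ring

lemma norm_cayley_lt_one {z w : ℂ} (hz : 0 < z.im) (hw : 0 < w.im) : ‖cayley z w‖ < 1 := by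
  have h := one_sub_norm_cayley_sq hz hw
  have : 0 < w.im * z.im / ‖w - conj z‖ ^ 2 := by
    have := sub_conj_ne_zero hw hz
    positivity
  exact (sq_lt_one_iff₀ (norm_nonneg _)).mp (by linarith)

lemma mapsTo_cayley {z : ℂ} (hz : 0 < z.im) : MapsTo (cayley z) ℍ (ball 0 1) :=
  fun _ hw => mem_ball_zero_iff.mpr (norm_cayley_lt_one hz hw)

lemma differentiableOn_cayley {z : ℂ} (hz : 0 < z.im) : DifferentiableOn ℂ (cayley z) ℍ :=
  fun _ hw => ((differentiableAt_id.sub_const z).div (differentiableAt_id.sub_const _)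
    (sub_conj_ne_zero hw hz)).differentiableWithinAt

lemma im_cayleyInv (z u : ℂ) : (cayleyInv z u).im = z.im * (1 - ‖u‖ ^ 2) / ‖1 - u‖ ^ 2 := by
  simp only [cayleyInv, div_im, ← normSq_eq_norm_sq, normSq_apply, sub_re, sub_im, mul_re, mul_im,
    conj_re, conj_im, one_re, one_im]
  ring

lemma mapsTo_cayleyInv {z : ℂ} (hz : 0 < z.im) : MapsTo (cayleyInv z) (ball 0 1) ℍ := by
  intro u hu
  rw [mem_ball_zero_iff] at hu
  have hu1 : 1 - u ≠ 0 := sub_ne_zero.mpr fun h => by simp [← h] at hu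
  have : ‖u‖ ^ 2 < 1 := (sq_lt_one_iff₀ (norm_nonneg _)).mpr hu
  rw [mem_ofPred_eq, im_cayleyInv]
  exact div_pos (mul_pos hz (by linarith)) (by positivity)

lemma differentiableOn_cayleyInv (z : ℂ) : DifferentiableOn ℂ (cayleyInv z) (ball 0 1) := by
  intro u hu
  have hu1 : 1 - u ≠ 0 := sub_ne_zero.mpr fun h => by simp [← h] at hu
  exact ((differentiableAt_const z).sub (differentiableAt_id.const_mul _)).div
    ((differentiableAt_const 1).sub differentiableAt_id) hu1 |>.differentiableWithinAt

lemma cayleyInv_cayley {z w : ℂ} (hz : 0 < z.im) (hw : 0 < w.im) : cayleyInv z (cayley z w) = w := by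
  have hw' := sub_conj_ne_zero hw hz
  have hz' := sub_conj_ne_zero hz hz
  rw [cayleyInv, cayley, one_sub_div hw', div_div_eq_mul_div, div_eq_iff (by simpa using hz')]
  field_simp
  ring

variable {f : ℂ → ℂ}

theorem norm_cayley_le_norm_cayley_of_mapsTo (hf : DifferentiableOn ℂ f ℍ) (hmap : MapsTo f ℍ ℍ)
    {z w : ℂ} (hz : 0 < z.im) (hw : 0 < w.im) : ‖cayley (f z) (f w)‖ ≤ ‖cayley z w‖ := by
  have hfz : 0 < (f z).im := hmap hz
  have hmaps : MapsTo (cayley (f z) ∘ f ∘ cayleyInv z) (ball 0 1) (ball 0 1) :=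
    (mapsTo_cayley hfz).comp (hmap.comp (mapsTo_cayleyInv hz))
  have hdiff : DifferentiableOn ℂ (cayley (f z) ∘ f ∘ cayleyInv z) (ball 0 1) :=
    (differentiableOn_cayley hfz).comp (hf.comp (differentiableOn_cayleyInv z)
      (mapsTo_cayleyInv hz)) (hmap.comp (mapsTo_cayleyInv hz))
  simpa [cayleyInv_cayley hz hw] using norm_le_norm_of_mapsTo_ball hdiff
    (hmaps.mono_right ball_subset_closedBall) (by simp [cayleyInv, cayley])
    (norm_cayley_lt_one hz hw)

theorem im_mul_im_div_le_of_mapsTo (hf : DifferentiableOn ℂ f ℍ) (hmap : MapsTo f ℍ ℍ)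
    {z w : ℂ} (hz : 0 < z.im) (hw : 0 < w.im) :
    w.im * z.im / ‖w - conj z‖ ^ 2 ≤ (f w).im * (f z).im / ‖f w - conj (f z)‖ ^ 2 := by
  have hle : ‖cayley (f z) (f w)‖ ^ 2 ≤ ‖cayley z w‖ ^ 2 := by
    gcongr
    exact norm_cayley_le_norm_cayley_of_mapsTo hf hmap hz hw
  linarith [one_sub_norm_cayley_sq hz hw, one_sub_norm_cayley_sq (hmap hz) (hmap hw)]

lemma im_nonneg_of_continuousAt {x : ℂ} (hx : 0 ≤ x.im) (hf : ContinuousAt f x)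
    (hmap : MapsTo f ℍ ℍ) : 0 ≤ (f x).im := by
  simpa using hf.continuousWithinAt.mem_closure (s := ℍ) (by simpa using hx) hmap

lemma HasDerivAt.im_comp_ofReal {c : ℂ} {a : ℝ} (hd : HasDerivAt f c a) :
    HasDerivAt (fun t : ℝ => (f t).im) c.im a :=
  imCLM.hasFDerivAt.comp_hasDerivAt a hd.comp_ofReal

lemma im_deriv_eq_zero_of_mapsTo {c : ℂ} {a : ℝ} (hcont : ∀ᶠ w in 𝓝 (a : ℂ), ContinuousAt f w)
    (hmap : MapsTo f ℍ ℍ) (ha : (f a).im = 0) (hd : HasDerivAt f c a) : c.im = 0 := by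
  have hmin : IsLocalMin (fun t : ℝ => (f t).im) a := by
    filter_upwards [(continuous_ofReal.tendsto a).eventually hcont] with t ht
    rw [ha]
    exact im_nonneg_of_continuousAt (by simp) ht hmap
  exact hmin.hasDerivAt_eq_zero hd.im_comp_ofReal

lemma tendsto_im_comp_I_mul_div {c : ℂ} (hd : HasDerivAt f c 0) (h0 : f 0 = 0) :
    Tendsto (fun t : ℝ => (f (I * t)).im / t) (𝓝[>] 0) (𝓝 c.re) := by
  have hI : HasDerivAt (fun w => f (I * w)) (c * I) ((0 : ℝ) : ℂ) := by
    simpa [Function.comp_def] using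
      hd.comp_of_eq ((0 : ℝ) : ℂ) ((hasDerivAt_id _).const_mul I) (by simp)
  have := hasDerivAt_iff_tendsto_slope_zero.mp hI.im_comp_ofReal
  simpa [h0, div_eq_inv_mul] using this.mono_left (nhdsGT_le_nhdsNE 0)

theorem julia_inequality_of_hasDerivAt (hf : DifferentiableOn ℂ f ℍ) (hmap : MapsTo f ℍ ℍ)
    {c : ℂ} (hd : HasDerivAt f c 0) (h0 : f 0 = 0) {z : ℂ} (hz : 0 < z.im) :
    z.im / ‖z‖ ^ 2 ≤ c.re * (f z).im / ‖f z‖ ^ 2 := by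
  have hfz : f z ≠ 0 := fun h => by simpa [h] using hmap hz
  have hz0 : z ≠ 0 := fun h => by simp [h] at hz
  have hI : Tendsto (fun t : ℝ => I * t) (𝓝[>] 0) (𝓝 0) := by
    have : Continuous fun t : ℝ => I * t := by fun_prop
    simpa using (this.tendsto 0).mono_left nhdsWithin_le_nhds
  have hlhs : Tendsto (fun t : ℝ => z.im / ‖I * t - conj z‖ ^ 2) (𝓝[>] 0)
      (𝓝 (z.im / ‖z‖ ^ 2)) := by
    refine tendsto_const_nhds.div ?_ (by positivity)
    simpa using ((hI.sub_const (conj z)).norm.pow 2)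
  have hrhs : Tendsto (fun t : ℝ => (f (I * t)).im / t * (f z).im / ‖f (I * t) - conj (f z)‖ ^ 2)
      (𝓝[>] 0) (𝓝 (c.re * (f z).im / ‖f z‖ ^ 2)) := by
    refine ((tendsto_im_comp_I_mul_div hd h0).mul_const _).div ?_ (by positivity)
    simpa [h0] using ((hd.continuousAt.tendsto.comp hI).sub_const (conj (f z))).norm.pow 2
  refine le_of_tendsto_of_tendsto hlhs hrhs ?_
  filter_upwards [self_mem_nhdsWithin] with t (ht : 0 < t)
  have hpick := im_mul_im_div_le_of_mapsTo hf hmap hz (w := I * t) (by simpa using ht)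
  rw [show (I * (t : ℂ)).im = t by simp] at hpick
  calc z.im / ‖I * t - conj z‖ ^ 2 = t * z.im / ‖I * t - conj z‖ ^ 2 / t := by field_simp
    _ ≤ (f (I * t)).im * (f z).im / ‖f (I * t) - conj (f z)‖ ^ 2 / t := by gcongr
    _ = (f (I * t)).im / t * (f z).im / ‖f (I * t) - conj (f z)‖ ^ 2 := by ring

end

theorem julia_inequality_halfplane_general
    (U : Set ℂ) (hU : IsOpen U) (hUH : {z : ℂ | 0 < z.im} ⊆ U) (h0U : (0 : ℂ) ∈ U)
    (f : ℂ → ℂ) (hf : DifferentiableOn ℂ f U)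
    (hmap : ∀ z : ℂ, 0 < z.im → 0 < (f z).im)
    (hfix : f 0 = 0) :
    (deriv f 0).im = 0 ∧ 0 < (deriv f 0).re ∧
      ∀ z : ℂ, 0 < z.im →
        (deriv f 0).re * (f z).im / ‖f z‖ ^ 2 ≥ z.im / ‖z‖ ^ 2 := by
  have hd : HasDerivAt f (deriv f 0) 0 := (hf.differentiableAt (hU.mem_nhds h0U)).hasDerivAt
  have hjulia (z : ℂ) (hz : 0 < z.im) : z.im / ‖z‖ ^ 2 ≤ (deriv f 0).re * (f z).im / ‖f z‖ ^ 2 :=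
    julia_inequality_of_hasDerivAt (hf.mono hUH) hmap hd hfix hz
  refine ⟨?_, ?_, hjulia⟩
  · have hcont : ∀ᶠ w in 𝓝 ((0 : ℝ) : ℂ), ContinuousAt f w := by
      filter_upwards [hU.mem_nhds (by simpa using h0U)] with w hw
      exact (hf.differentiableAt (hU.mem_nhds hw)).continuousAt
    exact im_deriv_eq_zero_of_mapsTo hcont hmap (by simp [hfix]) (by simpa using hd)
  · have hfI : 0 < (f I).im := hmap I (by simp)
    have hjuliaI := hjulia I (by simp)
    simp only [I_im, norm_I, one_pow, div_one] at hjuliaI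
    by_contra! hre
    have : (deriv f 0).re * (f I).im / ‖f I‖ ^ 2 ≤ 0 :=
      div_nonpos_of_nonpos_of_nonneg (mul_nonpos_of_nonpos_of_nonneg hre hfI.le) (by positivity)
    linarith

/-- Julia's fundamental inequality on the upper half-plane. -/
theorem julia_inequality_halfplane
    (U : Set ℂ) (hU : IsOpen U) (hUH : {z : ℂ | 0 < z.im} ⊆ U) (h0U : (0 : ℂ) ∈ U)
    (f : ℂ → ℂ) (hf : DifferentiableOn ℂ f U)
    (hmap : ∀ z : ℂ, 0 < z.im → 0 < (f z).im)
    (hfix : f 0 = 0)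
    (hnc : ¬ ∃ w : ℂ, ∀ z : ℂ, 0 < z.im → f z = w) :
    (deriv f 0).im = 0 ∧ 0 < (deriv f 0).re ∧
      ∀ z : ℂ, 0 < z.im →
        (deriv f 0).re * (f z).im / ‖f z‖ ^ 2 ≥ z.im / ‖z‖ ^ 2 :=
  julia_inequality_halfplane_general U hU hUH h0U f hf hmap hfix
end

section
/- (Equality case of Julia's inequality) Let f be holomorphic on an open set containing the upper half-plane ℍ and the point 0, with f(z) ∈ ℍ for all z ∈ ℍ, f(0) = 0, and f not constant. If there exists a point z₀ ∈ ℍ with f'(0) · Im(f(z₀))/|f(z₀)|² = Im(z₀)/|z₀|², then f is a Möbius transformation: there exist real numbers a, b, c, d with a·d − b·c > 0 such that f(z) = (a·z + b)/(c·z + d) for all z ∈ ℍ. -/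
/-!
Conjugating `f` by Möbius maps `ℍ → 𝔻` and applying the Schwarz lemma gives the Schwarz–Pick
inequality `Im z Im w / |z - w̄|² ≤ Im f(z) Im f(w) / |f(z) - conj f(w)|²`. Putting `w = it` and
letting `t → 0⁺` yields Julia's inequality `Im(-1/z) ≤ f'(0) Im(-1/f(z))`. So
`G(z) = 1/z - f'(0)/f(z)` is holomorphic on `ℍ` with `Im G ≥ 0`, and equality at `z₀` means that
`Im G` attains the value `0` inside `ℍ`. By the open mapping theorem `G` is a real constant `r`,
and solving for `f` gives `f(z) = f'(0) z / (1 - r z)`.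
-/

open Complex ComplexConjugate Set Metric Filter Topology

namespace Complex

theorem ne_zero_of_im_pos {z : ℂ} (hz : 0 < z.im) : z ≠ 0 :=
  fun h => hz.ne' (by rw [h, zero_im])

theorem norm_sub_conj_sq (u v : ℂ) :
    ‖u - conj v‖ ^ 2 = ‖u - v‖ ^ 2 + 4 * u.im * v.im := by
  simp only [Complex.sq_norm, normSq_apply, sub_re, sub_im, conj_re, conj_im]
  ring

theorem sub_conj_ne_zero {u v : ℂ} (hu : 0 < u.im) (hv : 0 < v.im) : u - conj v ≠ 0 :=
  ne_zero_of_im_pos (by rw [sub_im, conj_im]; linarith)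

/-- The Möbius map `ℍ → 𝔻` sending `w` to `0`. -/
noncomputable def halfPlaneToDisc (w z : ℂ) : ℂ := (z - w) / (z - conj w)

noncomputable def discToHalfPlane (w ζ : ℂ) : ℂ := (w - conj w * ζ) / (1 - ζ)

theorem norm_halfPlaneToDisc_sq {w z : ℂ} (hw : 0 < w.im) (hz : 0 < z.im) :
    ‖halfPlaneToDisc w z‖ ^ 2 = 1 - 4 * (z.im * w.im / ‖z - conj w‖ ^ 2) := by
  have hne : ‖z - conj w‖ ^ 2 ≠ 0 := by simpa using sub_conj_ne_zero hz hw
  rw [halfPlaneToDisc, norm_div, div_pow, eq_sub_iff_add_eq, ← mul_div_assoc, ← add_div,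
    div_eq_one_iff_eq hne, norm_sub_conj_sq]
  ring

theorem norm_halfPlaneToDisc_lt_one {w z : ℂ} (hw : 0 < w.im) (hz : 0 < z.im) :
    ‖halfPlaneToDisc w z‖ < 1 := by
  have : 0 < z.im * w.im / ‖z - conj w‖ ^ 2 :=
    div_pos (mul_pos hz hw) (pow_pos (norm_pos_iff.mpr (sub_conj_ne_zero hz hw)) 2)
  rw [← sq_lt_one_iff₀ (norm_nonneg _), norm_halfPlaneToDisc_sq hw hz]
  linarith

theorem im_discToHalfPlane_pos {w ζ : ℂ} (hw : 0 < w.im) (hζ : ‖ζ‖ < 1) :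
    0 < (discToHalfPlane w ζ).im := by
  have hne : 1 - ζ ≠ 0 := fun h => by simp [← sub_eq_zero.mp h] at hζ
  have hζ2 : normSq ζ < 1 := by rw [← Complex.sq_norm]; nlinarith [norm_nonneg ζ]
  have : (discToHalfPlane w ζ).im = w.im * (1 - normSq ζ) / normSq (1 - ζ) := by
    simp only [discToHalfPlane, div_im, ← sub_div]
    congr 1
    simp only [sub_im, sub_re, mul_im, mul_re, conj_re, conj_im, one_re, one_im, normSq_apply]
    ring
  rw [this]
  exact div_pos (mul_pos hw (by linarith)) (normSq_pos.mpr hne)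

theorem discToHalfPlane_zero (w : ℂ) : discToHalfPlane w 0 = w := by
  simp [discToHalfPlane]

theorem discToHalfPlane_halfPlaneToDisc {w z : ℂ} (hw : 0 < w.im) (hz : 0 < z.im) :
    discToHalfPlane w (halfPlaneToDisc w z) = z := by
  have hz' : z - conj w ≠ 0 := sub_conj_ne_zero hz hw
  have hw' : w - conj w ≠ 0 := sub_conj_ne_zero hw hw
  rw [discToHalfPlane, halfPlaneToDisc]
  field_simp
  rw [sub_sub_sub_cancel_left, div_eq_iff hw']
  ring

theorem differentiableAt_discToHalfPlane (w : ℂ) {ζ : ℂ} (hζ : ζ ≠ 1) :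
    DifferentiableAt ℂ (discToHalfPlane w) ζ := by
  unfold discToHalfPlane
  fun_prop (disch := exact sub_ne_zero.mpr hζ.symm)

theorem differentiableAt_halfPlaneToDisc {w z : ℂ} (hw : 0 < w.im) (hz : 0 < z.im) :
    DifferentiableAt ℂ (halfPlaneToDisc w) z := by
  unfold halfPlaneToDisc
  fun_prop (disch := exact sub_conj_ne_zero hz hw)

/-- The Schwarz–Pick lemma for self-maps of the upper half-plane. -/
theorem norm_halfPlaneToDisc_le {f : ℂ → ℂ} (hf : DifferentiableOn ℂ f {z | 0 < z.im})
    (hmap : ∀ z, 0 < z.im → 0 < (f z).im) {z w : ℂ} (hz : 0 < z.im) (hw : 0 < w.im) :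
    ‖halfPlaneToDisc (f w) (f z)‖ ≤ ‖halfPlaneToDisc w z‖ := by
  set F := halfPlaneToDisc (f w) ∘ f ∘ discToHalfPlane w
  have hD : ∀ ζ ∈ ball (0 : ℂ) 1, 0 < (discToHalfPlane w ζ).im := fun ζ hζ =>
    im_discToHalfPlane_pos hw (mem_ball_zero_iff.mp hζ)
  have hFd : DifferentiableOn ℂ F (ball 0 1) := fun ζ hζ =>
    have hζ1 : ζ ≠ 1 := by rintro rfl; simp at hζ
    ((differentiableAt_halfPlaneToDisc (hmap w hw) (hmap _ (hD ζ hζ))).comp ζ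
      ((hf.differentiableAt ((isOpen_lt continuous_const continuous_im).mem_nhds (hD ζ hζ))).comp
        ζ (differentiableAt_discToHalfPlane w hζ1))).differentiableWithinAt
  have hFmaps : MapsTo F (ball 0 1) (closedBall 0 1) := fun ζ hζ =>
    mem_closedBall_zero_iff.mpr (norm_halfPlaneToDisc_lt_one (hmap w hw) (hmap _ (hD ζ hζ))).le
  have hF0 : F 0 = 0 := by simp [F, discToHalfPlane_zero, halfPlaneToDisc]
  simpa [F, discToHalfPlane_halfPlaneToDisc hw hz] using
    norm_le_norm_of_mapsTo_ball hFd hFmaps hF0 (norm_halfPlaneToDisc_lt_one hw hz)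

theorem im_mul_im_div_norm_sub_conj_sq_le {f : ℂ → ℂ} (hf : DifferentiableOn ℂ f {z | 0 < z.im})
    (hmap : ∀ z, 0 < z.im → 0 < (f z).im) {z w : ℂ} (hz : 0 < z.im) (hw : 0 < w.im) :
    z.im * w.im / ‖z - conj w‖ ^ 2 ≤ (f z).im * (f w).im / ‖f z - conj (f w)‖ ^ 2 := by
  have h := pow_le_pow_left₀ (norm_nonneg _) (norm_halfPlaneToDisc_le hf hmap hz hw) 2
  rw [norm_halfPlaneToDisc_sq hw hz, norm_halfPlaneToDisc_sq (hmap w hw) (hmap z hz)] at h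
  linarith

theorem tendsto_norm_sub_conj_sq {α : Type*} {l : Filter α} {g : α → ℂ} (hg : Tendsto g l (𝓝 0))
    (u : ℂ) : Tendsto (fun t => ‖u - conj (g t)‖ ^ 2) l (𝓝 (‖u‖ ^ 2)) := by
  have : Continuous fun v : ℂ => ‖u - conj v‖ ^ 2 := by fun_prop
  simpa only [Function.comp_def, map_zero, sub_zero] using (this.tendsto 0).comp hg

theorem _root_.HasDerivAt.tendsto_im_apply_ofReal_mul_I_div {f : ℂ → ℂ} {f' : ℂ}
    (hf : HasDerivAt f f' 0) (h0 : f 0 = 0) :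
    Tendsto (fun t : ℝ => (f (t * I)).im / t) (𝓝[≠] 0) (𝓝 f'.re) := by
  have hI : HasDerivAt (fun t : ℝ => (t : ℂ) * I) I 0 := by
    simpa using (hasDerivAt_id (0 : ℝ)).ofReal_comp.mul_const I
  have hslope := ((by simpa using hf : HasDerivAt f f' ((0 : ℝ) * I)).comp 0 hI).tendsto_slope
  have := (continuous_im.tendsto _).comp hslope
  simp only [Function.comp_def, slope_def_module, sub_zero, ofReal_zero, zero_mul, h0, smul_im,
    mul_I_im] at this
  simpa only [div_eq_inv_mul, smul_eq_mul] using this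

theorem julia_inequality {f : ℂ → ℂ} {f' : ℂ} (hf : DifferentiableOn ℂ f {z | 0 < z.im})
    (hmap : ∀ z, 0 < z.im → 0 < (f z).im) (hf' : HasDerivAt f f' 0) (h0 : f 0 = 0)
    {z : ℂ} (hz : 0 < z.im) :
    z.im / ‖z‖ ^ 2 ≤ f'.re * (f z).im / ‖f z‖ ^ 2 := by
  have hI : Tendsto (fun t : ℝ => (t : ℂ) * I) (𝓝[>] 0) (𝓝 0) := by
    have : Continuous fun t : ℝ => (t : ℂ) * I := by fun_prop
    simpa using (this.tendsto 0).mono_left nhdsWithin_le_nhds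
  have hfI : Tendsto (fun t : ℝ => f (t * I)) (𝓝[>] 0) (𝓝 0) :=
    h0 ▸ hf'.continuousAt.tendsto.comp hI
  have hlhs : Tendsto (fun t : ℝ => z.im / ‖z - conj (t * I)‖ ^ 2) (𝓝[>] 0)
      (𝓝 (z.im / ‖z‖ ^ 2)) :=
    tendsto_const_nhds.div (tendsto_norm_sub_conj_sq hI z) (by simpa using ne_zero_of_im_pos hz)
  have hrhs : Tendsto (fun t : ℝ => (f z).im * ((f (t * I)).im / t) / ‖f z - conj (f (t * I))‖ ^ 2)
      (𝓝[>] 0) (𝓝 ((f z).im * f'.re / ‖f z‖ ^ 2)) :=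
    (tendsto_const_nhds.mul ((hf'.tendsto_im_apply_ofReal_mul_I_div h0).mono_left
      (nhdsGT_le_nhdsNE 0))).div (tendsto_norm_sub_conj_sq hfI (f z))
      (by simpa using ne_zero_of_im_pos (hmap z hz))
  refine (le_of_tendsto_of_tendsto hlhs hrhs ?_).trans_eq (by ring)
  filter_upwards [self_mem_nhdsWithin] with t (ht : 0 < t)
  have hpick := im_mul_im_div_norm_sub_conj_sq_le hf hmap hz (w := t * I) (by simpa using ht)
  rw [← div_le_div_iff_of_pos_right ht] at hpick
  convert hpick using 1
  · rw [mul_I_im, ofReal_re]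
    field_simp
  · ring

theorem im_inv_sub_ofReal_mul_inv (a : ℝ) (z w : ℂ) :
    (z⁻¹ - a * w⁻¹).im = a * w.im / ‖w‖ ^ 2 - z.im / ‖z‖ ^ 2 := by
  simp only [sub_im, inv_im, im_ofReal_mul, normSq_eq_norm_sq]
  ring

end Complex

theorem AnalyticOnNhd.eqOn_of_im_nonneg_of_im_eq_zero {E : Type*} [NormedAddCommGroup E]
    [NormedSpace ℂ E] {g : E → ℂ} {U : Set E} (hg : AnalyticOnNhd ℂ g U) (hU : IsPreconnected U)
    (hUo : IsOpen U) (him : ∀ z ∈ U, 0 ≤ (g z).im) {z₀ : E} (hz₀ : z₀ ∈ U)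
    (hz₀im : (g z₀).im = 0) : ∀ z ∈ U, g z = g z₀ := by
  rcases hg.is_constant_or_isOpen hU with ⟨c, hc⟩ | hopen
  · intro z hz
    rw [hc z hz, hc z₀ hz₀]
  · have hint : g z₀ ∈ interior {w : ℂ | 0 ≤ w.im} :=
      interior_mono (image_subset_iff.mpr him : g '' U ⊆ {w : ℂ | 0 ≤ w.im})
        ((hopen U subset_rfl hUo).interior_eq.symm ▸ mem_image_of_mem g hz₀)
    rw [interior_setOfPred_le_im, mem_ofPred_eq, hz₀im] at hint
    exact absurd hint (lt_irrefl 0)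

theorem eq_mul_div_one_sub_mul_of_inv_sub_mul_inv_eq {K : Type*} [Field K] {a r z w : K}
    (ha : a ≠ 0) (hz : z ≠ 0) (hw : w ≠ 0) (h : z⁻¹ - a * w⁻¹ = r) :
    w = a * z / (1 - r * z) := by
  have hmul : w * (1 - r * z) = a * z := by
    field_simp at h
    linear_combination h
  have hden : 1 - r * z ≠ 0 := by
    rintro hzero
    rw [hzero, mul_zero] at hmul
    exact mul_ne_zero ha hz hmul.symm
  rw [eq_div_iff hden, hmul]

theorem Complex.exists_inv_sub_mul_inv_eq_ofReal_of_julia_eq {f : ℂ → ℂ} {f' : ℂ}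
    (hf : DifferentiableOn ℂ f {z | 0 < z.im}) (hmap : ∀ z, 0 < z.im → 0 < (f z).im)
    (hf' : HasDerivAt f f' 0) (h0 : f 0 = 0) {z₀ : ℂ} (hz₀ : 0 < z₀.im)
    (heq : f'.re * (f z₀).im / ‖f z₀‖ ^ 2 = z₀.im / ‖z₀‖ ^ 2) :
    ∃ r : ℝ, ∀ z, 0 < z.im → z⁻¹ - f'.re * (f z)⁻¹ = r := by
  have hH : IsOpen {z : ℂ | 0 < z.im} := isOpen_lt continuous_const continuous_im
  set G : ℂ → ℂ := fun z => z⁻¹ - f'.re * (f z)⁻¹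
  have hG : AnalyticOnNhd ℂ G {z | 0 < z.im} := by
    refine DifferentiableOn.analyticOnNhd (fun z (hz : 0 < z.im) => ?_) hH
    exact ((differentiableAt_id.inv (ne_zero_of_im_pos hz)).sub
      (((hf.differentiableAt (hH.mem_nhds hz)).inv (ne_zero_of_im_pos (hmap z hz))).const_mul _))
      |>.differentiableWithinAt
  have hGz₀ : (G z₀).im = 0 := by rw [im_inv_sub_ofReal_mul_inv, heq, sub_self]
  have hGconst := hG.eqOn_of_im_nonneg_of_im_eq_zero (convex_halfSpace_im_gt 0).isPreconnected hH
    (fun z hz => by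
      rw [im_inv_sub_ofReal_mul_inv, sub_nonneg]
      exact julia_inequality hf hmap hf' h0 hz) hz₀ hGz₀
  refine ⟨(G z₀).re, fun z hz => (hGconst z hz).trans ?_⟩
  apply Complex.ext <;> simp [hGz₀]

theorem julia_inequality_equality_case_general
    (U : Set ℂ) (hU : IsOpen U) (hUH : {z : ℂ | 0 < z.im} ⊆ U) (h0U : (0 : ℂ) ∈ U)
    (f : ℂ → ℂ) (hf : DifferentiableOn ℂ f U)
    (hmap : ∀ z : ℂ, 0 < z.im → 0 < (f z).im)
    (hfix : f 0 = 0)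
    (z₀ : ℂ) (hz₀ : 0 < z₀.im)
    (heq : (deriv f 0).re * (f z₀).im / ‖f z₀‖ ^ 2
            = z₀.im / ‖z₀‖ ^ 2) :
    ∃ a b c d : ℝ, a * d - b * c > 0 ∧
      ∀ z : ℂ, 0 < z.im → f z = ((a : ℂ) * z + b) / ((c : ℂ) * z + d) := by
  set a := (deriv f 0).re
  have ha : 0 < a := by
    have hpos : 0 < a * (f z₀).im / ‖f z₀‖ ^ 2 :=
      heq ▸ div_pos hz₀ (pow_pos (norm_pos_iff.mpr (ne_zero_of_im_pos hz₀)) 2)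
    have hnum := (div_pos_iff_of_pos_right
      (pow_pos (norm_pos_iff.mpr (ne_zero_of_im_pos (hmap z₀ hz₀))) 2)).mp hpos
    exact pos_of_mul_pos_left hnum (hmap z₀ hz₀).le
  obtain ⟨r, hr⟩ := exists_inv_sub_mul_inv_eq_ofReal_of_julia_eq (hf.mono hUH) hmap
    (hf.differentiableAt (hU.mem_nhds h0U)).hasDerivAt hfix hz₀ heq
  refine ⟨a, 0, -r, 1, by simpa using ha, fun z hz => ?_⟩
  rw [eq_mul_div_one_sub_mul_of_inv_sub_mul_inv_eq (ofReal_ne_zero.mpr ha.ne')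
    (ne_zero_of_im_pos hz) (ne_zero_of_im_pos (hmap z hz)) (hr z hz)]
  push_cast
  ring

/-- Equality case of Julia's inequality: equality at one point forces `f` to be a
Möbius transformation with real coefficients and positive determinant. -/
theorem julia_inequality_equality_case
    (U : Set ℂ) (hU : IsOpen U) (hUH : {z : ℂ | 0 < z.im} ⊆ U) (h0U : (0 : ℂ) ∈ U)
    (f : ℂ → ℂ) (hf : DifferentiableOn ℂ f U)
    (hmap : ∀ z : ℂ, 0 < z.im → 0 < (f z).im)
    (hfix : f 0 = 0)
    (hnc : ¬ ∃ w : ℂ, ∀ z : ℂ, 0 < z.im → f z = w)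
    (z₀ : ℂ) (hz₀ : 0 < z₀.im)
    (heq : (deriv f 0).re * (f z₀).im / ‖f z₀‖ ^ 2
            = z₀.im / ‖z₀‖ ^ 2) :
    ∃ a b c d : ℝ, a * d - b * c > 0 ∧
      ∀ z : ℂ, 0 < z.im → f z = ((a : ℂ) * z + b) / ((c : ℂ) * z + d) :=
  julia_inequality_equality_case_general U hU hUH h0U f hf hmap hfix z₀ hz₀ heq
end

section
/- (Julia's inequality, sequential form) Let f be holomorphic on the upper half-plane ℍ with f(z) ∈ ℍ for all z ∈ ℍ. Suppose there is a sequence (ζₙ) of points of ℍ with ζₙ → 0, f(ζₙ) → 0, and the ratios Im(f(ζₙ))/Im(ζₙ) bounded above; let β ≥ 0 be the limit inferior of Im(f(ζₙ))/Im(ζₙ). Then for every z ∈ ℍ: β · Im(f(z))/|f(z)|² ≥ Im(z)/|z|². -/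
/-!
Pulling back the Schwarz lemma along the Möbius maps between the unit disc and `ℍ` gives the
Schwarz–Pick inequality `Im z Im w / |z - conj w|² ≤ Im f(z) Im f(w) / |f(z) - conj f(w)|²`.
Taking `w = ζₙ` and dividing by `Im ζₙ` bounds `Im f(ζₙ) / Im ζₙ` from below by a quantity
tending to `(Im z / |z|²) / (Im f(z) / |f(z)|²)`, because `ζₙ → 0` and `f(ζₙ) → 0`; so the
liminf `β` is at least this limit.
-/

open Complex ComplexConjugate Filter Metric Set Topology

namespace Complex

lemma normSq_sub_conj (p q : ℂ) :
    normSq (p - conj q) = normSq (p - q) + 4 * p.im * q.im := by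
  simp only [normSq_apply, sub_re, sub_im, conj_re, conj_im]
  ring

lemma sub_conj_ne_zero_s9 {p q : ℂ} (hp : 0 < p.im) (hq : 0 < q.im) : p - conj q ≠ 0 := by
  intro h
  have := congrArg im h
  simp only [sub_im, conj_im, zero_im] at this
  linarith

lemma norm_div_sub_conj_lt_one {p q : ℂ} (hp : 0 < p.im) (hq : 0 < q.im) :
    ‖(p - q) / (p - conj q)‖ < 1 := by
  rw [norm_div, div_lt_one (norm_pos_iff.2 (sub_conj_ne_zero_s9 hp hq))]
  refine lt_of_pow_lt_pow_left₀ 2 (norm_nonneg _) ?_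
  rw [← normSq_eq_norm_sq, ← normSq_eq_norm_sq, normSq_sub_conj]
  nlinarith

/-- The Möbius map of the unit disc onto `{z | 0 < z.im}` sending `0` to `w`, inverse to
`z ↦ (z - w) / (z - conj w)`. -/
noncomputable def discToUpperHalfPlane (w ζ : ℂ) : ℂ := (conj w * ζ - w) / (ζ - 1)

lemma sub_one_ne_zero_of_mem_ball {ζ : ℂ} (hζ : ζ ∈ ball (0 : ℂ) 1) : ζ - 1 ≠ 0 := by
  rw [sub_ne_zero]
  rintro rfl
  simp at hζ

lemma im_discToUpperHalfPlane {w ζ : ℂ} (hζ : ζ ≠ 1) :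
    (discToUpperHalfPlane w ζ).im = w.im * (1 - normSq ζ) / normSq (ζ - 1) := by
  have hns : normSq (ζ - 1) ≠ 0 := by simpa [normSq_eq_zero, sub_eq_zero] using hζ
  rw [discToUpperHalfPlane, div_im]
  field_simp
  simp only [normSq_apply, sub_re, sub_im, mul_re, mul_im, conj_re, conj_im, one_re, one_im]
  ring

lemma im_discToUpperHalfPlane_pos {w ζ : ℂ} (hw : 0 < w.im) (hζ : ζ ∈ ball (0 : ℂ) 1) :
    0 < (discToUpperHalfPlane w ζ).im := by
  have hζ1 := sub_one_ne_zero_of_mem_ball hζ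
  rw [im_discToUpperHalfPlane (sub_ne_zero.1 hζ1)]
  have hζ' : normSq ζ < 1 := by
    rw [normSq_eq_norm_sq]
    simpa using hζ
  have : 0 < normSq (ζ - 1) := normSq_pos.2 hζ1
  have : 0 < 1 - normSq ζ := by linarith
  positivity

lemma differentiableOn_discToUpperHalfPlane (w : ℂ) :
    DifferentiableOn ℂ (discToUpperHalfPlane w) (ball 0 1) :=
  DifferentiableOn.div (by fun_prop) (by fun_prop) fun _ hζ => sub_one_ne_zero_of_mem_ball hζ

lemma discToUpperHalfPlane_zero (w : ℂ) : discToUpperHalfPlane w 0 = w := by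
  simp [discToUpperHalfPlane]

lemma discToUpperHalfPlane_div_sub_conj {z w : ℂ} (hz : 0 < z.im) (hw : 0 < w.im) :
    discToUpperHalfPlane w ((z - w) / (z - conj w)) = z := by
  have hzw := sub_conj_ne_zero_s9 hz hw
  have hww : conj w - w ≠ 0 := by
    rw [sub_ne_zero]
    intro h
    have := congrArg im h
    simp only [conj_im] at this
    linarith
  have hden : (z - w) / (z - conj w) - 1 = (conj w - w) / (z - conj w) := by
    field_simp
    ring
  rw [discToUpperHalfPlane, hden, div_eq_iff (div_ne_zero hww hzw)]
  field_simp
  ring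

theorem norm_div_sub_conj_le_of_mapsTo_upperHalfPlane {f : ℂ → ℂ}
    (hf : DifferentiableOn ℂ f {z : ℂ | 0 < z.im}) (hmap : ∀ z : ℂ, 0 < z.im → 0 < (f z).im)
    {z w : ℂ} (hz : 0 < z.im) (hw : 0 < w.im) :
    ‖(f z - f w) / (f z - conj (f w))‖ ≤ ‖(z - w) / (z - conj w)‖ := by
  set u := discToUpperHalfPlane w
  set g : ℂ → ℂ := fun ζ => (f (u ζ) - f w) / (f (u ζ) - conj (f w))
  have hu : ∀ ζ ∈ ball (0 : ℂ) 1, 0 < (u ζ).im := fun ζ hζ => im_discToUpperHalfPlane_pos hw hζ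
  have hfu : DifferentiableOn ℂ (f ∘ u) (ball 0 1) :=
    hf.comp (differentiableOn_discToUpperHalfPlane w) hu
  have hg : DifferentiableOn ℂ g (ball 0 1) :=
    (hfu.sub_const _).div (hfu.sub_const _) fun ζ hζ =>
      sub_conj_ne_zero_s9 (hmap _ (hu ζ hζ)) (hmap w hw)
  have hmaps : MapsTo g (ball 0 1) (closedBall 0 1) := fun ζ hζ => by
    rw [mem_closedBall_zero_iff]
    exact (norm_div_sub_conj_lt_one (hmap _ (hu ζ hζ)) (hmap w hw)).le
  have hg0 : g 0 = 0 := by simp [g, u, discToUpperHalfPlane_zero]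
  have := norm_le_norm_of_mapsTo_ball hg hmaps hg0 (norm_div_sub_conj_lt_one hz hw)
  simpa only [g, u, discToUpperHalfPlane_div_sub_conj hz hw] using this

/-- Equivalent to Schwarz–Pick, as `1 - |z - w|² / |z - w̄|² = 4 Im z Im w / |z - w̄|²`. -/
theorem im_mul_im_div_normSq_sub_conj_le {f : ℂ → ℂ}
    (hf : DifferentiableOn ℂ f {z : ℂ | 0 < z.im}) (hmap : ∀ z : ℂ, 0 < z.im → 0 < (f z).im)
    {z w : ℂ} (hz : 0 < z.im) (hw : 0 < w.im) :
    z.im * w.im / normSq (z - conj w)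
      ≤ (f z).im * (f w).im / normSq (f z - conj (f w)) := by
  have hfz := hmap z hz
  have hfw := hmap w hw
  have hρ := norm_div_sub_conj_le_of_mapsTo_upperHalfPlane hf hmap hz hw
  rw [norm_div, norm_div, div_le_div_iff₀ (norm_pos_iff.2 (sub_conj_ne_zero_s9 hfz hfw))
    (norm_pos_iff.2 (sub_conj_ne_zero_s9 hz hw))] at hρ
  have hρ2 : normSq (f z - f w) * normSq (z - conj w)
      ≤ normSq (z - w) * normSq (f z - conj (f w)) := by
    simpa only [mul_pow, ← normSq_eq_norm_sq] using pow_le_pow_left₀ (by positivity) hρ 2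
  rw [div_le_div_iff₀ (normSq_pos.2 (sub_conj_ne_zero_s9 hz hw))
    (normSq_pos.2 (sub_conj_ne_zero_s9 hfz hfw))]
  simp only [normSq_sub_conj] at hρ2 ⊢
  nlinarith [normSq_nonneg (f z - f w), normSq_nonneg (z - w)]

theorem im_div_normSq_sub_conj_div_le {f : ℂ → ℂ}
    (hf : DifferentiableOn ℂ f {z : ℂ | 0 < z.im}) (hmap : ∀ z : ℂ, 0 < z.im → 0 < (f z).im)
    {z w : ℂ} (hz : 0 < z.im) (hw : 0 < w.im) :
    (z.im / normSq (z - conj w)) / ((f z).im / normSq (f z - conj (f w))) ≤ (f w).im / w.im := by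
  have hD := normSq_pos.2 (sub_conj_ne_zero_s9 (hmap z hz) (hmap w hw))
  have := hmap z hz
  rw [div_le_iff₀ (by positivity)]
  calc z.im / normSq (z - conj w)
      = z.im * w.im / normSq (z - conj w) / w.im := by field_simp
    _ ≤ (f z).im * (f w).im / normSq (f z - conj (f w)) / w.im :=
      div_le_div_of_nonneg_right (im_mul_im_div_normSq_sub_conj_le hf hmap hz hw) hw.le
    _ = (f w).im / w.im * ((f z).im / normSq (f z - conj (f w))) := by ring

lemma tendsto_im_div_normSq_sub_conj {ι : Type*} {l : Filter ι} {w : ι → ℂ}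
    (hw : Tendsto w l (𝓝 0)) {z : ℂ} (hz : z ≠ 0) :
    Tendsto (fun i => z.im / normSq (z - conj (w i))) l (𝓝 (z.im / normSq z)) := by
  have h : Tendsto (fun i => z - conj (w i)) l (𝓝 z) := by
    simpa using tendsto_const_nhds.sub ((continuous_conj.tendsto 0).comp hw)
  exact tendsto_const_nhds.div ((continuous_normSq.tendsto z).comp h) (normSq_pos.2 hz).ne'

end Complex

theorem julia_inequality_sequential_general
    (f : ℂ → ℂ) (hf : DifferentiableOn ℂ f {z : ℂ | 0 < z.im})
    (hmap : ∀ z : ℂ, 0 < z.im → 0 < (f z).im)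
    (ζ : ℕ → ℂ) (hζH : ∀ n, 0 < (ζ n).im)
    (hζ0 : Tendsto ζ atTop (nhds 0))
    (hfζ0 : Tendsto (fun n => f (ζ n)) atTop (nhds 0))
    (hbd : ∃ M : ℝ, ∀ n, (f (ζ n)).im / (ζ n).im ≤ M)
    (β : ℝ)
    (hβ : β = atTop.liminf (fun n => (f (ζ n)).im / (ζ n).im)) :
    ∀ z : ℂ, 0 < z.im →
      β * (f z).im / ‖f z‖ ^ 2 ≥ z.im / ‖z‖ ^ 2 := by
  intro z hz
  have hfz := hmap z hz
  have hz0 : z ≠ 0 := fun h => by simp [h] at hz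
  have hfz0 : f z ≠ 0 := fun h => by simp [h] at hfz
  set q : ℕ → ℝ := fun n =>
    (z.im / normSq (z - conj (ζ n))) / ((f z).im / normSq (f z - conj (f (ζ n))))
  have hq_le : ∀ n, q n ≤ (f (ζ n)).im / (ζ n).im := fun n =>
    im_div_normSq_sub_conj_div_le hf hmap hz (hζH n)
  have hq_lim : Tendsto q atTop (𝓝 ((z.im / normSq z) / ((f z).im / normSq (f z)))) :=
    (tendsto_im_div_normSq_sub_conj hζ0 hz0).div (tendsto_im_div_normSq_sub_conj hfζ0 hfz0)
      (div_pos hfz (normSq_pos.2 hfz0)).ne'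
  obtain ⟨M, hM⟩ := hbd
  have hβ_ge : (z.im / normSq z) / ((f z).im / normSq (f z)) ≤ β := by
    rw [hβ, ← hq_lim.liminf_eq]
    exact liminf_le_liminf (Eventually.of_forall hq_le) hq_lim.isBoundedUnder_ge
      (isCoboundedUnder_ge_of_le atTop hM)
  rw [ge_iff_le, ← normSq_eq_norm_sq, ← normSq_eq_norm_sq, mul_div_assoc,
    ← div_le_iff₀ (div_pos hfz (normSq_pos.2 hfz0))]
  exact hβ_ge

/-- Julia's inequality in sequential form, with no boundary regularity assumed. -/
theorem julia_inequality_sequential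
    (f : ℂ → ℂ) (hf : DifferentiableOn ℂ f {z : ℂ | 0 < z.im})
    (hmap : ∀ z : ℂ, 0 < z.im → 0 < (f z).im)
    (ζ : ℕ → ℂ) (hζH : ∀ n, 0 < (ζ n).im)
    (hζ0 : Tendsto ζ atTop (nhds 0))
    (hfζ0 : Tendsto (fun n => f (ζ n)) atTop (nhds 0))
    (hbd : ∃ M : ℝ, ∀ n, (f (ζ n)).im / (ζ n).im ≤ M)
    (β : ℝ) (hβ0 : 0 ≤ β)
    (hβ : β = atTop.liminf (fun n => (f (ζ n)).im / (ζ n).im)) :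
    ∀ z : ℂ, 0 < z.im →
      β * (f z).im / ‖f z‖ ^ 2 ≥ z.im / ‖z‖ ^ 2 :=
  julia_inequality_sequential_general f hf hmap ζ hζH hζ0 hfζ0 hbd β hβ
end

section
/- (Jack's lemma / theorem after Julia) Let f be holomorphic on an open neighborhood of the closed unit disk, not identically 0, with |f(z)| ≤ 1 for all z in the closed unit disk and f(0) = 0. If the maximum of |f| over the closed unit disk is attained at the boundary point α (with |α| = 1), then α·f'(α)/f(α) is a real number greater than or equal to 1. -/
open Complex Metric

/-!
Write `w = f α`. Along the circle `t ↦ α e^{it}` the function `|f|²` is maximal at `t = 0`, so its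
derivative `2 Re (conj w f'(α) α i)` vanishes: `conj w α f'(α)` is real. Along the radius
`r ↦ r α`, the Schwarz lemma with bound `|w|` gives `|f(r α)|² ≤ r² |w|²`, with equality at `r = 1`;
comparing left derivatives at `r = 1` yields `Re (conj w α f'(α)) ≥ |w|²`. Finally
`α f'(α) / w = conj w α f'(α) / |w|²`.
-/

open ComplexConjugate Set Filter

theorem IsLocalMaxOn.hasDerivAt_nonneg_of_Iic {g : ℝ → ℝ} {a g' : ℝ}
    (h : IsLocalMaxOn g (Iic a) a) (hg : HasDerivAt g g' a) : 0 ≤ g' := by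
  have hcone : (-1 : ℝ) ∈ posTangentConeAt (Iic a) a :=
    mem_posTangentConeAt_of_segment_subset <| by
      rw [segment_eq_Icc']
      exact fun x hx => hx.2.trans (by simp)
  simpa using h.hasFDerivWithinAt_nonpos hg.hasFDerivAt.hasFDerivWithinAt hcone

theorem hasDerivAt_norm_sq_comp {f : ℂ → ℂ} {γ : ℝ → ℂ} {v : ℂ} {t : ℝ}
    (hf : DifferentiableAt ℂ f (γ t)) (hγ : HasDerivAt γ v t) :
    HasDerivAt (fun s => ‖f (γ s)‖ ^ 2) (2 * (conj (f (γ t)) * deriv f (γ t) * v).re) t := by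
  have h := (hf.hasDerivAt.comp t hγ).norm_sq
  rw [Function.comp_apply, Complex.inner] at h
  exact h.congr_deriv (by congr 2; ring)

theorem norm_le_mul_norm_of_forall_norm_le {f : ℂ → ℂ} {M : ℝ}
    (hd : DifferentiableOn ℂ f (ball 0 1)) (h₀ : f 0 = 0)
    (hM : ∀ z ∈ closedBall (0 : ℂ) 1, ‖f z‖ ≤ M) :
    ∀ z ∈ closedBall (0 : ℂ) 1, ‖f z‖ ≤ M * ‖z‖ := by
  intro z hz
  rcases (mem_closedBall_zero_iff.mp hz).lt_or_eq with hz1 | hz1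
  · have hmaps : MapsTo f (ball 0 1) (closedBall (f 0) M) := fun u hu => by
      simpa [h₀] using hM u (ball_subset_closedBall hu)
    simpa [h₀] using dist_le_div_mul_dist_of_mapsTo_ball hd hmaps (mem_ball_zero_iff.mpr hz1)
  · simpa [hz1] using hM z hz

section BoundaryMaximum

variable {f : ℂ → ℂ} {α : ℂ}

theorem im_conj_mul_deriv_mul_eq_zero_of_forall_norm_le (hfα : DifferentiableAt ℂ f α)
    (hα : ‖α‖ = 1) (hmax : ∀ z ∈ closedBall (0 : ℂ) 1, ‖f z‖ ≤ ‖f α‖) :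
    (conj (f α) * deriv f α * α).im = 0 := by
  set γ : ℝ → ℂ := fun t => α * exp (t * I)
  have hγ0 : γ 0 = α := by simp [γ]
  have hγ : HasDerivAt γ (α * I) 0 := by
    simpa [γ] using (((hasDerivAt_id (0 : ℝ)).ofReal_comp.mul_const I).cexp).const_mul α
  have hloc : IsLocalMax (fun t => ‖f (γ t)‖ ^ 2) 0 := Eventually.of_forall fun t => by
    have hγt : γ t ∈ closedBall (0 : ℂ) 1 := by simp [γ, hα]
    simpa [hγ0] using pow_le_pow_left₀ (norm_nonneg _) (hmax _ hγt) 2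
  have := hloc.hasDerivAt_eq_zero (hasDerivAt_norm_sq_comp (hγ0 ▸ hfα) hγ)
  rw [hγ0, ← mul_assoc, mul_I_re] at this
  linarith

theorem norm_sq_le_re_conj_mul_deriv_mul (hfα : DifferentiableAt ℂ f α) (hα : ‖α‖ = 1)
    (hschwarz : ∀ z ∈ closedBall (0 : ℂ) 1, ‖f z‖ ≤ ‖f α‖ * ‖z‖) :
    ‖f α‖ ^ 2 ≤ (conj (f α) * deriv f α * α).re := by
  set γ : ℝ → ℂ := fun r => r * α
  have hγ1 : γ 1 = α := by simp [γ]
  have hγ : HasDerivAt γ α 1 := by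
    simpa [γ] using (hasDerivAt_id (1 : ℝ)).ofReal_comp.mul_const α
  have hloc : IsLocalMaxOn (fun r => ‖f (γ r)‖ ^ 2 - r ^ 2 * ‖f α‖ ^ 2) (Iic 1) 1 := by
    filter_upwards [Icc_mem_nhdsLE one_pos] with r ⟨hr0, hr1⟩
    have hγr : γ r ∈ closedBall (0 : ℂ) 1 := by simp [γ, hα, abs_of_nonneg hr0, hr1]
    have := pow_le_pow_left₀ (norm_nonneg _) (hschwarz _ hγr) 2
    simp only [γ, norm_mul, hα, norm_real, Real.norm_of_nonneg hr0] at this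
    simp only [hγ1, one_pow, one_mul, sub_self]
    nlinarith
  have := hloc.hasDerivAt_nonneg_of_Iic <|
    (hasDerivAt_norm_sq_comp (hγ1 ▸ hfα) hγ).sub ((hasDerivAt_pow 2 (1 : ℝ)).mul_const _)
  rw [hγ1] at this
  simp only [Nat.cast_ofNat, one_pow, mul_one] at this
  linarith

end BoundaryMaximum

theorem jack_lemma_general
    (U : Set ℂ) (hU : IsOpen U) (hUc : closedBall (0 : ℂ) 1 ⊆ U)
    (f : ℂ → ℂ) (hf : DifferentiableOn ℂ f U)
    (hfix : f 0 = 0)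
    (hne : ∃ z ∈ closedBall (0 : ℂ) 1, f z ≠ 0)
    (α : ℂ) (hα : ‖α‖ = 1)
    (hmax : ∀ z ∈ closedBall (0 : ℂ) 1, ‖f z‖ ≤ ‖f α‖) :
    (α * deriv f α / f α).im = 0 ∧ 1 ≤ (α * deriv f α / f α).re := by
  have hfα : DifferentiableAt ℂ f α :=
    hf.differentiableAt (hU.mem_nhds (hUc (by simp [hα])))
  have hschwarz := norm_le_mul_norm_of_forall_norm_le
    (hf.mono (ball_subset_closedBall.trans hUc)) hfix hmax
  have hpos : 0 < ‖f α‖ ^ 2 := by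
    obtain ⟨z, hz, hfz⟩ := hne
    exact pow_pos ((norm_pos_iff.mpr hfz).trans_le (hmax z hz)) 2
  have hquot : α * deriv f α / f α = ((‖f α‖ ^ 2)⁻¹ : ℝ) * (conj (f α) * deriv f α * α) := by
    rw [div_eq_mul_inv, inv_def, normSq_eq_norm_sq]
    ring
  rw [hquot, re_ofReal_mul, im_ofReal_mul, le_inv_mul_iff₀ hpos, mul_one]
  exact ⟨by simp [im_conj_mul_deriv_mul_eq_zero_of_forall_norm_le hfα hα hmax],
    norm_sq_le_re_conj_mul_deriv_mul hfα hα hschwarz⟩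

/-- Jack's lemma (theorem after Julia). -/
theorem jack_lemma
    (U : Set ℂ) (hU : IsOpen U) (hUc : closedBall (0 : ℂ) 1 ⊆ U)
    (f : ℂ → ℂ) (hf : DifferentiableOn ℂ f U)
    (hmap : ∀ z ∈ closedBall (0 : ℂ) 1, ‖f z‖ ≤ 1)
    (hfix : f 0 = 0)
    (hne : ∃ z ∈ closedBall (0 : ℂ) 1, f z ≠ 0)
    (α : ℂ) (hα : ‖α‖ = 1)
    (hmax : ∀ z ∈ closedBall (0 : ℂ) 1, ‖f z‖ ≤ ‖f α‖) :
    (α * deriv f α / f α).im = 0 ∧ 1 ≤ (α * deriv f α / f α).re :=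
  jack_lemma_general U hU hUc f hf hfix hne α hα hmax
end

section
/- Let f be holomorphic on an open set containing the open unit disk 𝔻 and the point 1, with |f(z)| < 1 for all z ∈ 𝔻, f(0) = 0, and f(1) = 1. Then f'(1) is a real number with f'(1) ≥ 1; and if f is not the identity function on 𝔻, then f'(1) > 1. -/
/-!
Write `f z = z * g z` with `g = dslope f 0`. By the Schwarz lemma `g` maps the disc into the
closed disc, and `g 1 = 1`, `f' 1 = 1 + g' 1`. If `1 - g z = (1 - z) ^ n * h z` near `1`, then
approaching `1` along `z = 1 - ε w` with `0 < re w`, the inequality `0 ≤ re (1 - g z)` gives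
`0 ≤ re (w ^ n * h 1)` for every `w` in the right half-plane. For `n = 1` (with `h 1 = g' 1`)
this says that `g' 1` is real and nonnegative. For `n ≥ 2` the powers `w ^ n` cover the slit
plane, which forces `h 1 = 0`; so if `g' 1 = 0` then `g - 1` vanishes to infinite order at `1`,
hence `g = 1` on the disc and `f` is the identity there.
-/

open Complex Metric Set Filter Topology

theorem eventually_one_sub_mul_mem_ball {w : ℂ} (hw : 0 < w.re) :
    ∀ᶠ ε : ℝ in 𝓝[>] 0, 1 - ε * w ∈ ball (0 : ℂ) 1 := by
  have hw2 : 0 < normSq w := normSq_pos.2 fun h ↦ by simp [h] at hw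
  filter_upwards [Ioo_mem_nhdsGT (div_pos hw hw2)] with ε ⟨hε₀, hε₁⟩
  rw [mem_ball_zero_iff, ← sq_lt_one_iff₀ (norm_nonneg _), ← normSq_eq_norm_sq]
  rw [lt_div_iff₀ hw2] at hε₁
  have : normSq (1 - ε * w) = 1 - 2 * ε * w.re + ε * (ε * normSq w) := by
    simp only [normSq_apply, sub_re, one_re, mul_re, ofReal_re, ofReal_im, sub_im, one_im, mul_im]
    ring
  rw [this]
  nlinarith

theorem re_pow_mul_nonneg_of_eventually_eq {g h : ℂ → ℂ} {n : ℕ}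
    (hg : MapsTo g (ball 0 1) (closedBall 0 1)) (hh : ContinuousAt h 1)
    (heq : ∀ᶠ z in 𝓝 1, 1 - g z = (1 - z) ^ n * h z) {w : ℂ} (hw : 0 < w.re) :
    0 ≤ (w ^ n * h 1).re := by
  have hpath : Tendsto (fun ε : ℝ ↦ 1 - ε * w) (𝓝[>] 0) (𝓝 1) := by
    have : Continuous (fun ε : ℝ ↦ 1 - ε * w) := by fun_prop
    simpa using (this.tendsto 0).mono_left nhdsWithin_le_nhds
  have hlim :
      Tendsto (fun ε : ℝ ↦ (w ^ n * h (1 - ε * w)).re) (𝓝[>] 0) (𝓝 (w ^ n * h 1).re) :=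
    (continuous_re.continuousAt.comp (continuousAt_const.mul hh)).tendsto.comp hpath
  refine ge_of_tendsto hlim ?_
  filter_upwards [eventually_one_sub_mul_mem_ball hw, hpath.eventually heq, self_mem_nhdsWithin]
    with ε hball hε heps
  have hre : 0 ≤ (1 - g (1 - ε * w)).re := by
    simpa using (re_le_norm _).trans (mem_closedBall_zero_iff.1 (hg hball))
  rw [hε, show (1 : ℂ) - (1 - ε * w) = ε * w by ring, mul_pow, mul_assoc, ← ofReal_pow,
    re_ofReal_mul] at hre
  exact nonneg_of_mul_nonneg_right hre (pow_pos heps n)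

theorem im_eq_zero_and_re_nonneg_of_forall_re_mul_nonneg {c : ℂ}
    (h : ∀ w : ℂ, 0 < w.re → 0 ≤ (w * c).re) : c.im = 0 ∧ 0 ≤ c.re := by
  refine ⟨?_, by simpa using h 1 one_pos⟩
  by_contra hc
  -- `re ((1 + t * I) * c) = re c - t * im c`, which is `-1` for this `t`
  have := h (1 + ((1 + c.re) / c.im : ℝ) * I) (by simp)
  simp only [mul_re, add_re, one_re, ofReal_re, I_re, mul_zero, ofReal_im, I_im, mul_one,
    sub_zero, add_im, one_im, mul_im, add_zero, zero_add] at this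
  field_simp at this
  linarith

theorem deriv_im_eq_zero_and_re_nonneg {g : ℂ → ℂ}
    (hg : MapsTo g (ball 0 1) (closedBall 0 1)) (hd : DifferentiableAt ℂ g 1) (hg1 : g 1 = 1) :
    (deriv g 1).im = 0 ∧ 0 ≤ (deriv g 1).re := by
  refine im_eq_zero_and_re_nonneg_of_forall_re_mul_nonneg fun w hw ↦ ?_
  have heq : ∀ z, 1 - g z = (1 - z) ^ 1 * dslope g 1 z := fun z ↦ by
    have := sub_smul_dslope g 1 z
    rw [smul_eq_mul, hg1] at this
    linear_combination this
  simpa [dslope_same] using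
    re_pow_mul_nonneg_of_eventually_eq hg (continuousAt_dslope_same.2 hd) (.of_forall heq) hw

theorem exists_re_pos_pow_eq {n : ℕ} (hn : 2 ≤ n) {u : ℂ} (hu : u ∈ slitPlane) :
    ∃ w : ℂ, 0 < w.re ∧ w ^ n = u := by
  have hn0 : (n : ℂ) ≠ 0 := by exact_mod_cast (by omega : n ≠ 0)
  refine ⟨exp (log u / n), ?_, ?_⟩
  · have harg : |u.arg| < Real.pi :=
      abs_lt.2 ⟨neg_pi_lt_arg u, (arg_le_pi u).lt_of_ne (slitPlane_arg_ne_pi hu)⟩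
    have hn2 : (2 : ℝ) ≤ n := by exact_mod_cast hn
    rw [exp_re]
    refine mul_pos (Real.exp_pos _) (Real.cos_pos_of_mem_Ioo ?_)
    rw [show (log u / n).im = u.arg / n by simp [div_natCast_im, log_im]]
    rw [mem_Ioo, ← abs_lt, abs_div, Nat.abs_cast, div_lt_iff₀ (by positivity)]
    nlinarith [Real.pi_pos]
  · rw [← exp_nat_mul, mul_div_cancel₀ _ hn0, exp_log (slitPlane_ne_zero hu)]

theorem eq_zero_of_forall_re_pow_mul_nonneg {n : ℕ} (hn : 2 ≤ n) {c : ℂ}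
    (h : ∀ w : ℂ, 0 < w.re → 0 ≤ (w ^ n * c).re) : c = 0 := by
  have key : ∀ u ∈ slitPlane, 0 ≤ (u * c).re := fun u hu ↦ by
    obtain ⟨w, hw, rfl⟩ := exists_re_pos_pow_eq hn hu
    exact h w hw
  have h₁ := key 1 (by simp [mem_slitPlane_iff])
  have h₂ := key I (by simp [mem_slitPlane_iff])
  have h₃ := key (-I) (by simp [mem_slitPlane_iff])
  have h₄ := key (-1 + I) (by simp [mem_slitPlane_iff])
  simp only [one_mul, mul_re, I_re, zero_mul, I_im, zero_sub, Left.nonneg_neg_iff, neg_mul, neg_re,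
    neg_neg, add_re, one_re, add_zero, add_im, neg_im, one_im, neg_zero, zero_add, sub_nonneg]
    at h₁ h₂ h₃ h₄
  apply Complex.ext <;> simp only [zero_re, zero_im] <;> linarith

theorem analyticOrderAt_sub_one_eq_top_of_two_le {g : ℂ → ℂ}
    (hg : MapsTo g (ball 0 1) (closedBall 0 1)) (han : AnalyticAt ℂ g 1)
    (h2 : 2 ≤ analyticOrderAt (g · - 1) 1) : analyticOrderAt (g · - 1) 1 = ⊤ := by
  by_contra hfin
  obtain ⟨n, hn⟩ := WithTop.ne_top_iff_exists.1 hfin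
  obtain ⟨h, hh, hh1, heq⟩ :=
    ((han.fun_sub analyticAt_const).analyticOrderAt_eq_natCast).1 hn.symm
  have hn2 : 2 ≤ n := Nat.cast_le.1 (hn ▸ h2)
  have heq' : ∀ᶠ z in 𝓝 1, 1 - g z = (1 - z) ^ n * ((-1) ^ (n + 1) * h z) :=
    heq.mono fun z hz ↦ by
      rw [smul_eq_mul, show z - 1 = -(1 - z) by ring, neg_pow] at hz
      linear_combination (-1) * hz
  have := eq_zero_of_forall_re_pow_mul_nonneg hn2 fun w hw ↦
    re_pow_mul_nonneg_of_eventually_eq hg (hh.continuousAt.const_mul _) heq' hw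
  exact hh1 (by simpa using this)

theorem AnalyticOnNhd.eqOn_of_preconnected_of_eventuallyEq_of_mem_closure
    {𝕜 E F : Type*} [NontriviallyNormedField 𝕜] [NormedAddCommGroup E] [NormedSpace 𝕜 E]
    [NormedAddCommGroup F] [NormedSpace 𝕜 F]
    {f g : E → F} {U : Set E} {z₀ : E}
    (hf : AnalyticOnNhd 𝕜 f U) (hg : AnalyticOnNhd 𝕜 g U) (hU : IsPreconnected U)
    (h₀ : z₀ ∈ closure U) (hfg : f =ᶠ[𝓝 z₀] g) : EqOn f g U := by
  obtain ⟨z, hzU, hz⟩ :=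
    ((mem_closure_iff_frequently.1 h₀).and_eventually hfg.eventuallyEq_nhds).exists
  exact hf.eqOn_of_preconnected_of_eventuallyEq hg hU hzU hz

theorem eqOn_const_one_of_deriv_eq_zero {g : ℂ → ℂ}
    (hg : MapsTo g (ball 0 1) (closedBall 0 1))
    (han : AnalyticOnNhd ℂ g (insert 1 (ball 0 1))) (hg1 : g 1 = 1) (hd : deriv g 1 = 0) :
    EqOn g (fun _ ↦ 1) (ball 0 1) := by
  have han1 : AnalyticAt ℂ g 1 := han 1 (mem_insert _ _)
  have h2 : ((2 : ℕ) : ℕ∞) ≤ analyticOrderAt (g · - 1) 1 := by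
    rw [natCast_le_analyticOrderAt_iff_iteratedDeriv_eq_zero (han1.fun_sub analyticAt_const)]
    intro i hi
    interval_cases i <;> simp [hg1, hd]
  have htop := analyticOrderAt_sub_one_eq_top_of_two_le hg han1 h2
  have hev : g =ᶠ[𝓝 1] fun _ ↦ 1 :=
    (analyticOrderAt_eq_top.1 htop).mono fun _ ↦ sub_eq_zero.1
  exact (han.mono (subset_insert _ _)).eqOn_of_preconnected_of_eventuallyEq_of_mem_closure
    analyticOnNhd_const (convex_ball _ _).isPreconnected (by simp [closure_ball]) hev

/-- A holomorphic self-map of the disk fixing `0` and the boundary point `1` has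
derivative at least `1` at `1`, with strict inequality unless it is the identity. -/
theorem deriv_ge_one_at_boundary_fixed_point
    (U : Set ℂ) (hU : IsOpen U) (hUD : ball (0 : ℂ) 1 ⊆ U) (h1U : (1 : ℂ) ∈ U)
    (f : ℂ → ℂ) (hf : DifferentiableOn ℂ f U)
    (hmap : ∀ z ∈ ball (0 : ℂ) 1, ‖f z‖ < 1)
    (hfix0 : f 0 = 0) (hfix1 : f 1 = 1) :
    (deriv f 1).im = 0 ∧ 1 ≤ (deriv f 1).re ∧
      ((¬ ∀ z ∈ ball (0 : ℂ) 1, f z = z) → 1 < (deriv f 1).re) := by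
  set g := dslope f 0
  have hfg : ∀ z, f z = z * g z := fun z ↦ by simpa [hfix0] using (sub_smul_dslope f 0 z).symm
  have hgU : DifferentiableOn ℂ g U :=
    (differentiableOn_dslope (hU.mem_nhds (hUD (mem_ball_self one_pos)))).2 hf
  have hg : MapsTo g (ball 0 1) (closedBall 0 1) := fun z hz ↦ by
    simpa using norm_dslope_le_div_of_mapsTo_ball (hf.mono hUD)
      (fun w hw ↦ by simpa [hfix0] using (hmap w hw).le) hz
  have hg1 : g 1 = 1 := by simpa [hfix1] using (hfg 1).symm
  have hgd : DifferentiableAt ℂ g 1 := hgU.differentiableAt (hU.mem_nhds h1U)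
  have hderiv : deriv f 1 = 1 + deriv g 1 := by
    rw [funext hfg, deriv_fun_mul differentiableAt_fun_id hgd]
    simp [hg1]
  obtain ⟨him, hre⟩ := deriv_im_eq_zero_and_re_nonneg hg hgd hg1
  refine ⟨by simp [hderiv, him], by simp [hderiv, hre], fun hne ↦ ?_⟩
  contrapose! hne
  rw [hderiv, add_re, one_re, add_le_iff_nonpos_right] at hne
  have hd : deriv g 1 = 0 := Complex.ext (le_antisymm hne hre) him
  have hconst := eqOn_const_one_of_deriv_eq_zero hg
    ((hgU.analyticOnNhd hU).mono (insert_subset h1U hUD)) hg1 hd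
  intro z hz
  rw [hfg, hconst hz, mul_one]
end

section
/- Let f be holomorphic on an open set containing the upper half-plane ℍ and the points 0 and 1, with f(z) ∈ ℍ for all z ∈ ℍ, f(0) = 0, f(1) = 1, and f not constant. Then f'(0) and f'(1) are positive real numbers and f'(0)·f'(1) ≥ 1. -/
/-!
Transporting the Schwarz lemma by Möbius maps gives the Schwarz–Pick inequality
`|f z - f w|² Im z Im w ≤ |z - w|² Im f(z) Im f(w)` on the upper half-plane. Letting
`z = r + iy` tend to a boundary fixed point `r`, where `Im f(r + iy) / y → Re f'(r)`, yields
Julia's inequality `|f w - r|² / Im f(w) ≤ Re f'(r) · |w - r|² / Im w`; moreover `f'(r)` is real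
because `t ↦ Im f(t)` is nonnegative on the real line and vanishes at `r`.
For `w = (1 + i)/2` and `p = f w` the Julia inequalities at `0` and `1` read `|p|² ≤ f'(0) Im p`
and `|p - 1|² ≤ f'(1) Im p`; multiplying them and using `Im p = Im (conj p · (p - 1))`, whence
`(Im p)² ≤ |p|² |p - 1|²`, gives `f'(0) f'(1) ≥ 1`.
-/

open Complex Metric Set Filter Topology ComplexConjugate

theorem HasDerivAt.comp_add_ofReal_mul_I {f : ℂ → ℂ} {a c : ℂ} (hda : HasDerivAt f a c) :
    HasDerivAt (fun y : ℝ => f (c + y * I)) (a * I) 0 := by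
  have hline : HasDerivAt (fun z : ℂ => c + z * I) I ((0 : ℝ) : ℂ) := by
    simpa using ((hasDerivAt_id (0 : ℂ)).mul_const I).const_add c
  exact (HasDerivAt.comp_of_eq _ hda hline (by simp)).comp_ofReal

theorem Complex.im_sq_le_normSq_mul_normSq_sub_one (p : ℂ) :
    p.im ^ 2 ≤ normSq p * normSq (p - 1) := by
  have h : (conj p * (p - 1)).im = p.im := by
    simp only [mul_im, conj_re, conj_im, sub_re, sub_im, one_re, one_im]
    ring
  simpa [sq, h, normSq_mul] using im_sq_le_normSq (conj p * (p - 1))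

namespace HalfPlane

noncomputable def toDisc (w z : ℂ) : ℂ := (z - w) / (z - conj w)

noncomputable def ofDisc (w u : ℂ) : ℂ := (w - conj w * u) / (1 - u)

variable {w z u : ℂ}

lemma normSq_sub_conj (z w : ℂ) : normSq (z - conj w) = normSq (z - w) + 4 * z.im * w.im := by
  simp only [normSq_apply, sub_re, sub_im, conj_re, conj_im]
  ring

lemma sub_conj_ne_zero (hz : 0 ≤ z.im) (hw : 0 < w.im) : z - conj w ≠ 0 := by
  intro h
  have := congrArg im h
  simp only [sub_im, conj_im, zero_im] at this
  linarith

lemma toDisc_self : toDisc w w = 0 := by simp [toDisc]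

lemma normSq_toDisc (z w : ℂ) :
    normSq (toDisc w z) = normSq (z - w) / (normSq (z - w) + 4 * z.im * w.im) := by
  rw [toDisc, normSq_div, normSq_sub_conj]

lemma norm_toDisc_lt_one (hz : 0 < z.im) (hw : 0 < w.im) : ‖toDisc w z‖ < 1 := by
  have hpos : 0 < normSq (z - w) + 4 * z.im * w.im :=
    add_pos_of_nonneg_of_pos (normSq_nonneg _) (by positivity)
  rw [← sq_lt_one_iff₀ (norm_nonneg _), Complex.sq_norm, normSq_toDisc, div_lt_one hpos]
  nlinarith

lemma ofDisc_zero : ofDisc w 0 = w := by simp [ofDisc]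

lemma im_ofDisc (w u : ℂ) : (ofDisc w u).im = w.im * (1 - normSq u) / normSq (1 - u) := by
  simp only [ofDisc, div_im, normSq_apply, sub_re, sub_im, mul_re, mul_im, conj_re, conj_im,
    one_re, one_im]
  ring

lemma im_ofDisc_pos (hw : 0 < w.im) (hu : ‖u‖ < 1) : 0 < (ofDisc w u).im := by
  have hu1 : 1 - u ≠ 0 := by
    rintro h
    rw [← sub_eq_zero.mp h, norm_one] at hu
    exact lt_irrefl _ hu
  have : normSq u < 1 := by rw [← Complex.sq_norm]; nlinarith [norm_nonneg u]
  rw [im_ofDisc]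
  exact div_pos (mul_pos hw (by linarith)) (normSq_pos.mpr hu1)

lemma ofDisc_toDisc (hz : 0 < z.im) (hw : 0 < w.im) : ofDisc w (toDisc w z) = z := by
  have h₁ : z - conj w ≠ 0 := sub_conj_ne_zero hz.le hw
  have h₂ : w - conj w ≠ 0 := sub_conj_ne_zero hw.le hw
  have h₃ : 1 - toDisc w z = (w - conj w) / (z - conj w) := by
    rw [toDisc]
    field_simp
    ring
  rw [ofDisc, h₃, toDisc]
  field_simp
  ring

lemma differentiableOn_ofDisc : DifferentiableOn ℂ (ofDisc w) (ball 0 1) := by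
  intro u hu
  refine DifferentiableAt.differentiableWithinAt ?_
  refine DifferentiableAt.div (by fun_prop) (by fun_prop) ?_
  rintro h
  rw [mem_ball_zero_iff, ← sub_eq_zero.mp h, norm_one] at hu
  exact lt_irrefl _ hu

lemma differentiableOn_toDisc (hw : 0 < w.im) : DifferentiableOn ℂ (toDisc w) {z | 0 < z.im} :=
  fun _ hz => ((differentiableAt_id.sub_const w).div (differentiableAt_id.sub_const _)
    (sub_conj_ne_zero (le_of_lt hz) hw)).differentiableWithinAt

variable {f : ℂ → ℂ}

theorem norm_toDisc_map_le (hf : DifferentiableOn ℂ f {z | 0 < z.im})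
    (hmap : ∀ z : ℂ, 0 < z.im → 0 < (f z).im) (hz : 0 < z.im) (hw : 0 < w.im) :
    ‖toDisc (f w) (f z)‖ ≤ ‖toDisc w z‖ := by
  have hofDisc : MapsTo (ofDisc w) (ball 0 1) {z | 0 < z.im} :=
    fun u hu => im_ofDisc_pos hw (mem_ball_zero_iff.mp hu)
  have hF : DifferentiableOn ℂ (toDisc (f w) ∘ f ∘ ofDisc w) (ball 0 1) :=
    (differentiableOn_toDisc (hmap w hw)).comp (hf.comp differentiableOn_ofDisc hofDisc)
      (fun u hu => hmap _ (hofDisc hu))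
  have hFmaps : MapsTo (toDisc (f w) ∘ f ∘ ofDisc w) (ball 0 1) (closedBall 0 1) :=
    fun u hu => mem_closedBall_zero_iff.mpr
      (norm_toDisc_lt_one (hmap _ (hofDisc hu)) (hmap w hw)).le
  have hF0 : (toDisc (f w) ∘ f ∘ ofDisc w) 0 = 0 := by
    simp only [Function.comp_apply, ofDisc_zero, toDisc_self]
  simpa only [Function.comp_apply, ofDisc_toDisc hz hw] using
    Complex.norm_le_norm_of_mapsTo_ball hF hFmaps hF0 (norm_toDisc_lt_one hz hw)

/-- The **Schwarz–Pick lemma** on the upper half-plane. -/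
theorem normSq_sub_mul_im_mul_im_le (hf : DifferentiableOn ℂ f {z | 0 < z.im})
    (hmap : ∀ z : ℂ, 0 < z.im → 0 < (f z).im) (hz : 0 < z.im) (hw : 0 < w.im) :
    normSq (f z - f w) * (z.im * w.im) ≤ normSq (z - w) * ((f z).im * (f w).im) := by
  have h := pow_le_pow_left₀ (norm_nonneg _) (norm_toDisc_map_le hf hmap hz hw) 2
  have hfz := hmap z hz
  have hfw := hmap w hw
  rw [Complex.sq_norm, Complex.sq_norm, normSq_toDisc, normSq_toDisc,
    div_le_div_iff₀ (add_pos_of_nonneg_of_pos (normSq_nonneg _) (by positivity))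
      (add_pos_of_nonneg_of_pos (normSq_nonneg _) (by positivity))] at h
  nlinarith

lemma im_nonneg_of_continuousAt (hmap : ∀ z : ℂ, 0 < z.im → 0 < (f z).im) (hz : 0 ≤ z.im)
    (hc : ContinuousAt f z) : 0 ≤ (f z).im := by
  have hz' : z ∈ closure {z : ℂ | 0 < z.im} := by rwa [closure_setOfPred_lt_im]
  have hmaps : MapsTo f {z : ℂ | 0 < z.im} {z | 0 < z.im} := fun z hz => hmap z hz
  have h := closure_mono hmaps.image_subset (mem_closure_image hc hz')
  rw [closure_setOfPred_lt_im] at h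
  exact h

variable {r : ℝ} {a : ℂ}

theorem im_eq_zero_of_hasDerivAt_of_fixed (hmap : ∀ z : ℂ, 0 < z.im → 0 < (f z).im)
    (hc : ∀ᶠ z in 𝓝 (r : ℂ), ContinuousAt f z) (hda : HasDerivAt f a r) (hfr : f r = r) :
    a.im = 0 := by
  have hmin : IsLocalMin (fun t : ℝ => (f t).im) r := by
    filter_upwards [continuous_ofReal.continuousAt.eventually hc] with t ht
    simpa [hfr] using im_nonneg_of_continuousAt hmap (by simp) ht
  simpa using hmin.hasDerivAt_eq_zero (imCLM.hasFDerivAt.comp_hasDerivAt r hda.comp_ofReal)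

/-- **Julia's lemma**: `f` maps each horodisc `{w | |w - r|² / Im w < R}` at the boundary fixed
point `r` into the horodisc `{w | |w - r|² / Im w < Re f'(r) R}`. -/
theorem julia_inequality (hf : DifferentiableOn ℂ f {z | 0 < z.im})
    (hmap : ∀ z : ℂ, 0 < z.im → 0 < (f z).im) (hda : HasDerivAt f a r) (hfr : f r = r)
    (hw : 0 < w.im) :
    normSq (f w - r) * w.im ≤ normSq (w - r) * ((f w).im * a.re) := by
  have hvert := hda.comp_add_ofReal_mul_I
  have hcont : Tendsto (fun y : ℝ => f (r + y * I)) (𝓝[>] 0) (𝓝 r) := by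
    simpa [hfr] using hvert.continuousAt.tendsto.mono_left nhdsWithin_le_nhds
  have hslope : Tendsto (fun y : ℝ => (f (r + y * I)).im / y) (𝓝[>] 0) (𝓝 a.re) := by
    have h := (continuous_im.tendsto _).comp (hasDerivAt_iff_tendsto_slope.mp hvert)
    rw [mul_I_im] at h
    refine (h.mono_left (nhdsWithin_mono _ fun y hy => ne_of_gt hy)).congr fun y => ?_
    simp only [Function.comp_apply, slope_def_module, sub_zero, ofReal_zero, zero_mul, add_zero,
      hfr, smul_im, sub_im, ofReal_im, smul_eq_mul, div_eq_inv_mul]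
  have hlhs : Tendsto (fun y : ℝ => normSq (f w - f (r + y * I)) * w.im) (𝓝[>] 0)
      (𝓝 (normSq (f w - r) * w.im)) :=
    ((continuous_normSq.tendsto _).comp (tendsto_const_nhds.sub hcont)).mul_const _
  have hrhs : Tendsto
      (fun y : ℝ => normSq (w - (r + y * I)) * ((f w).im * ((f (r + y * I)).im / y))) (𝓝[>] 0)
      (𝓝 (normSq (w - r) * ((f w).im * a.re))) := by
    refine Tendsto.mul ?_ (tendsto_const_nhds.mul hslope)
    have : Continuous fun y : ℝ => normSq (w - (r + y * I)) := by fun_prop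
    simpa using this.continuousAt.tendsto.mono_left (nhdsWithin_le_nhds (a := (0 : ℝ)))
  refine le_of_tendsto_of_tendsto hlhs hrhs ?_
  filter_upwards [self_mem_nhdsWithin] with y (hy : 0 < y)
  have h := normSq_sub_mul_im_mul_im_le hf hmap hw (show 0 < ((r : ℂ) + y * I).im by simpa)
  simp only [add_im, ofReal_im, mul_im, ofReal_re, I_re, I_im, zero_add] at h
  rw [← mul_div_assoc, ← mul_div_assoc, le_div_iff₀ hy]
  linarith

theorem im_deriv_eq_zero_and_julia_inequality {U : Set ℂ} (hU : IsOpen U)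
    (hUH : {z : ℂ | 0 < z.im} ⊆ U) (hf : DifferentiableOn ℂ f U)
    (hmap : ∀ z : ℂ, 0 < z.im → 0 < (f z).im) (hrU : (r : ℂ) ∈ U) (hfr : f r = r)
    (hw : 0 < w.im) :
    (deriv f r).im = 0 ∧
      normSq (f w - r) * w.im ≤ normSq (w - r) * ((f w).im * (deriv f r).re) := by
  have hda : HasDerivAt f (deriv f r) r := (hf.differentiableAt (hU.mem_nhds hrU)).hasDerivAt
  have hc : ∀ᶠ z in 𝓝 (r : ℂ), ContinuousAt f z :=
    (hU.eventually_mem hrU).mono fun z hz => (hf.differentiableAt (hU.mem_nhds hz)).continuousAt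
  exact ⟨im_eq_zero_of_hasDerivAt_of_fixed hmap hc hda hfr,
    julia_inequality (hf.mono hUH) hmap hda hfr hw⟩

end HalfPlane

theorem product_of_boundary_derivatives_ge_one_general
    (U : Set ℂ) (hU : IsOpen U) (hUH : {z : ℂ | 0 < z.im} ⊆ U)
    (h0U : (0 : ℂ) ∈ U) (h1U : (1 : ℂ) ∈ U)
    (f : ℂ → ℂ) (hf : DifferentiableOn ℂ f U)
    (hmap : ∀ z : ℂ, 0 < z.im → 0 < (f z).im)
    (hfix0 : f 0 = 0) (hfix1 : f 1 = 1) :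
    ((deriv f 0).im = 0 ∧ 0 < (deriv f 0).re) ∧
      ((deriv f 1).im = 0 ∧ 0 < (deriv f 1).re) ∧
      (deriv f 0).re * (deriv f 1).re ≥ 1 := by
  set w : ℂ := (1 + I) / 2
  have hwim : w.im = 1 / 2 := by simp [w]
  have hw : 0 < w.im := by rw [hwim]; norm_num
  obtain ⟨him0, hjulia0⟩ := HalfPlane.im_deriv_eq_zero_and_julia_inequality hU hUH hf hmap
    (r := 0) (by simpa) (by simpa using hfix0) hw
  obtain ⟨him1, hjulia1⟩ := HalfPlane.im_deriv_eq_zero_and_julia_inequality hU hUH hf hmap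
    (r := 1) (by simpa) (by simpa using hfix1) hw
  have hw0 : normSq w = 1 / 2 := by simp [w, normSq_apply]; norm_num
  have hw1 : normSq (w - 1) = 1 / 2 := by simp [w, normSq_apply]; norm_num
  simp only [ofReal_zero, ofReal_one, sub_zero, hw0, hw1, hwim] at him0 him1 hjulia0 hjulia1
  set p := f w
  have hp : 0 < p.im := hmap w hw
  have hp0 : normSq p ≤ p.im * (deriv f 0).re := by linarith
  have hp1 : normSq (p - 1) ≤ p.im * (deriv f 1).re := by linarith
  have ha0 : 0 < (deriv f 0).re :=
    pos_of_mul_pos_right ((normSq_pos.mpr fun h => by simp [h] at hp).trans_le hp0) hp.le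
  have ha1 : 0 < (deriv f 1).re :=
    pos_of_mul_pos_right ((normSq_pos.mpr fun h => by simp [sub_eq_zero.mp h] at hp).trans_le hp1)
      hp.le
  refine ⟨⟨him0, ha0⟩, ⟨him1, ha1⟩, le_of_mul_le_mul_left ?_ (pow_pos hp 2)⟩
  calc p.im ^ 2 * 1 ≤ normSq p * normSq (p - 1) := by
        simpa using im_sq_le_normSq_mul_normSq_sub_one p
    _ ≤ (p.im * (deriv f 0).re) * (p.im * (deriv f 1).re) :=
        mul_le_mul hp0 hp1 (normSq_nonneg _) (by positivity)
    _ = p.im ^ 2 * ((deriv f 0).re * (deriv f 1).re) := by ring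

/-- For a nonconstant holomorphic self-map of the half-plane with boundary fixed
points `0` and `1`, the product of the derivatives there is at least `1`. -/
theorem product_of_boundary_derivatives_ge_one
    (U : Set ℂ) (hU : IsOpen U) (hUH : {z : ℂ | 0 < z.im} ⊆ U)
    (h0U : (0 : ℂ) ∈ U) (h1U : (1 : ℂ) ∈ U)
    (f : ℂ → ℂ) (hf : DifferentiableOn ℂ f U)
    (hmap : ∀ z : ℂ, 0 < z.im → 0 < (f z).im)
    (hfix0 : f 0 = 0) (hfix1 : f 1 = 1)
    (hnc : ¬ ∃ w : ℂ, ∀ z : ℂ, 0 < z.im → f z = w) :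
    ((deriv f 0).im = 0 ∧ 0 < (deriv f 0).re) ∧
      ((deriv f 1).im = 0 ∧ 0 < (deriv f 1).re) ∧
      (deriv f 0).re * (deriv f 1).re ≥ 1 :=
  product_of_boundary_derivatives_ge_one_general U hU hUH h0U h1U f hf hmap hfix0 hfix1
end

section
/- Let f be holomorphic on an open set containing the upper half-plane ℍ and the points 0 and 1, with f(z) ∈ ℍ for all z ∈ ℍ, f(0) = 0, f(1) = 1, and f not constant. If f'(0) = 1 and f'(1) = 1, then f has a fixed point in the open upper half-plane: there exists z ∈ ℍ with f(z) = z. -/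
open Complex

/-!
Conjugating by Möbius maps between the half-plane and the unit disk, Schwarz's lemma says that a
holomorphic self-map `f` of the upper half-plane does not increase `‖z - v‖² / (z.im * v.im)`.
Letting `v = c + iε` tend to a boundary point `c` with `f c` real and `f' c = d` gives Julia's
inequality `‖f z - f c‖² / (f z).im ≤ d * ‖z - c‖² / z.im`. For `d = 1` at the fixed points `0`
and `1`, the horodisks `‖w‖² ≤ w.im` and `‖w - 1‖² ≤ w.im` are therefore mapped into themselves;
they meet only at `(1 + i) / 2`, which is thus fixed.
-/

open Set Filter Topology Metric ComplexConjugate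

local notation "ℍₒ" => UpperHalfPlane.upperHalfPlaneSet

lemma norm_sub_conj_sq_s15 (a b : ℂ) : ‖a - conj b‖ ^ 2 = ‖a - b‖ ^ 2 + 4 * a.im * b.im := by
  simp only [Complex.sq_norm, normSq_apply, sub_re, sub_im, conj_re, conj_im]
  ring

lemma norm_sub_lt_norm_sub_conj {a b : ℂ} (ha : 0 < a.im) (hb : 0 < b.im) :
    ‖a - b‖ < ‖a - conj b‖ := by
  refine pow_lt_pow_iff_left₀ (norm_nonneg _) (norm_nonneg _) two_ne_zero |>.mp ?_
  rw [norm_sub_conj_sq_s15]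
  nlinarith [mul_pos ha hb]

lemma sub_conj_ne_zero_s15 {a b : ℂ} (ha : 0 < a.im) (hb : 0 < b.im) : a - conj b ≠ 0 :=
  norm_pos_iff.mp ((norm_nonneg _).trans_lt (norm_sub_lt_norm_sub_conj ha hb))

lemma one_sub_ne_zero_of_norm_lt_one {ζ : ℂ} (hζ : ‖ζ‖ < 1) : 1 - ζ ≠ 0 := by
  rw [sub_ne_zero]
  rintro rfl
  simp at hζ

noncomputable def halfPlaneToDisk (w z : ℂ) : ℂ := (z - w) / (z - conj w)

noncomputable def diskToHalfPlane (w ζ : ℂ) : ℂ := (w - conj w * ζ) / (1 - ζ)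

lemma halfPlaneToDisk_self (w : ℂ) : halfPlaneToDisk w w = 0 := by
  simp [halfPlaneToDisk]

lemma diskToHalfPlane_zero (w : ℂ) : diskToHalfPlane w 0 = w := by
  simp [diskToHalfPlane]

lemma norm_halfPlaneToDisk_lt_one {w z : ℂ} (hw : 0 < w.im) (hz : 0 < z.im) :
    ‖halfPlaneToDisk w z‖ < 1 := by
  rw [halfPlaneToDisk, norm_div, div_lt_one (norm_pos_iff.mpr (sub_conj_ne_zero_s15 hz hw))]
  exact norm_sub_lt_norm_sub_conj hz hw

lemma im_diskToHalfPlane (w ζ : ℂ) :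
    (diskToHalfPlane w ζ).im = w.im * (1 - ‖ζ‖ ^ 2) / ‖1 - ζ‖ ^ 2 := by
  rw [diskToHalfPlane, div_im, Complex.sq_norm, Complex.sq_norm, div_sub_div_same]
  congr 1
  simp only [normSq_apply, sub_re, sub_im, mul_re, mul_im, conj_re, conj_im, one_re, one_im]
  ring

lemma im_diskToHalfPlane_pos {w ζ : ℂ} (hw : 0 < w.im) (hζ : ‖ζ‖ < 1) :
    0 < (diskToHalfPlane w ζ).im := by
  have h_norm_sq : 0 < 1 - ‖ζ‖ ^ 2 := by nlinarith [norm_nonneg ζ]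
  have h_denom : 0 < ‖1 - ζ‖ := norm_pos_iff.mpr (one_sub_ne_zero_of_norm_lt_one hζ)
  rw [im_diskToHalfPlane]
  positivity

lemma diskToHalfPlane_halfPlaneToDisk {w z : ℂ} (hw : 0 < w.im) (hz : 0 < z.im) :
    diskToHalfPlane w (halfPlaneToDisk w z) = z := by
  have hzw := sub_conj_ne_zero_s15 hz hw
  rw [diskToHalfPlane, halfPlaneToDisk, div_eq_iff]
  · field_simp
    ring
  · rw [one_sub_div hzw]
    refine div_ne_zero ?_ hzw
    simpa using sub_conj_ne_zero_s15 hw hw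

lemma im_mul_im_mul_norm_sub_sq_le_of_norm_halfPlaneToDisk_le {a b c d : ℂ} (ha : 0 < a.im)
    (hb : 0 < b.im) (hc : 0 < c.im) (hd : 0 < d.im)
    (h : ‖halfPlaneToDisk b a‖ ≤ ‖halfPlaneToDisk d c‖) :
    c.im * d.im * ‖a - b‖ ^ 2 ≤ a.im * b.im * ‖c - d‖ ^ 2 := by
  have hab := norm_pos_iff.mpr (sub_conj_ne_zero_s15 ha hb)
  have hcd := norm_pos_iff.mpr (sub_conj_ne_zero_s15 hc hd)
  rw [halfPlaneToDisk, halfPlaneToDisk, norm_div, norm_div, div_le_div_iff₀ hab hcd] at h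
  have hsq := pow_le_pow_left₀ (by positivity) h 2
  rw [mul_pow, mul_pow, norm_sub_conj_sq_s15, norm_sub_conj_sq_s15] at hsq
  nlinarith

theorem norm_halfPlaneToDisk_map_le {f : ℂ → ℂ} (hf : DifferentiableOn ℂ f ℍₒ)
    (hmap : MapsTo f ℍₒ ℍₒ) {z v : ℂ} (hz : 0 < z.im) (hv : 0 < v.im) :
    ‖halfPlaneToDisk (f v) (f z)‖ ≤ ‖halfPlaneToDisk v z‖ := by
  set g := halfPlaneToDisk (f v) ∘ f ∘ diskToHalfPlane v
  have hg : DifferentiableOn ℂ g (ball 0 1) := by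
    intro ζ hζ
    rw [mem_ball_zero_iff] at hζ
    have hφ : DifferentiableAt ℂ (diskToHalfPlane v) ζ :=
      .div (by fun_prop) (by fun_prop) (one_sub_ne_zero_of_norm_lt_one hζ)
    have hfφ : DifferentiableAt ℂ f (diskToHalfPlane v ζ) :=
      hf.differentiableAt (UpperHalfPlane.isOpen_upperHalfPlaneSet.mem_nhds
        (im_diskToHalfPlane_pos hv hζ))
    have hψ : DifferentiableAt ℂ (halfPlaneToDisk (f v)) (f (diskToHalfPlane v ζ)) :=
      .div (by fun_prop) (by fun_prop)
        (sub_conj_ne_zero_s15 (hmap (im_diskToHalfPlane_pos hv hζ)) (hmap hv))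
    exact (hψ.comp ζ (hfφ.comp ζ hφ)).differentiableWithinAt
  have hg_maps : MapsTo g (ball 0 1) (closedBall 0 1) := by
    intro ζ hζ
    rw [mem_ball_zero_iff] at hζ
    exact mem_closedBall_zero_iff.mpr
      (norm_halfPlaneToDisk_lt_one (hmap hv) (hmap (im_diskToHalfPlane_pos hv hζ))).le
  have hg0 : g 0 = 0 := by simp [g, diskToHalfPlane_zero, halfPlaneToDisk_self]
  simpa [g, diskToHalfPlane_halfPlaneToDisk hv hz] using
    Complex.norm_le_norm_of_mapsTo_ball hg hg_maps hg0 (norm_halfPlaneToDisk_lt_one hv hz)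

theorem im_mul_im_mul_norm_sub_map_sq_le {f : ℂ → ℂ} (hf : DifferentiableOn ℂ f ℍₒ)
    (hmap : MapsTo f ℍₒ ℍₒ) {z v : ℂ} (hz : 0 < z.im) (hv : 0 < v.im) :
    z.im * v.im * ‖f z - f v‖ ^ 2 ≤ (f z).im * (f v).im * ‖z - v‖ ^ 2 :=
  im_mul_im_mul_norm_sub_sq_le_of_norm_halfPlaneToDisk_le (hmap hz) (hmap hv) hz hv
    (norm_halfPlaneToDisk_map_le hf hmap hz hv)

theorem tendsto_im_div_of_hasDerivAt {f : ℂ → ℂ} {c d : ℂ} (hd : HasDerivAt f d c)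
    (hfc : (f c).im = 0) :
    Tendsto (fun ε : ℝ ↦ (f (c + ε * I)).im / ε) (𝓝[>] 0) (𝓝 d.re) := by
  have hline : Tendsto (fun ε : ℝ ↦ c + ε * I) (𝓝[>] 0) (𝓝[≠] c) := by
    refine tendsto_nhdsWithin_iff.mpr ⟨?_, ?_⟩
    · exact (Continuous.tendsto' (by fun_prop) 0 c (by simp)).mono_left nhdsWithin_le_nhds
    · filter_upwards [self_mem_nhdsWithin] with ε (hε : 0 < ε)
      simpa using hε.ne'
  refine ((continuous_re.tendsto d).comp (hd.tendsto_slope.comp hline)).congr' ?_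
  filter_upwards [self_mem_nhdsWithin] with ε (hε : 0 < ε)
  simp only [Function.comp_apply, slope_def_field, add_sub_cancel_left, div_re, sub_re, mul_re,
    ofReal_re, I_re, mul_zero, ofReal_im, I_im, mul_one, sub_self, normSq_apply, mul_im, add_zero,
    zero_add, zero_div, sub_im, hfc, sub_zero]
  field_simp

theorem im_mul_norm_sub_sq_le_of_hasDerivAt {f : ℂ → ℂ} (hf : DifferentiableOn ℂ f ℍₒ)
    (hmap : MapsTo f ℍₒ ℍₒ) {c d : ℂ} (hc : c.im = 0) (hfc : (f c).im = 0)
    (hd : HasDerivAt f d c) {z : ℂ} (hz : 0 < z.im) :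
    z.im * ‖f z - f c‖ ^ 2 ≤ d.re * (f z).im * ‖z - c‖ ^ 2 := by
  set v : ℝ → ℂ := fun ε ↦ c + ε * I
  have hv_im (ε : ℝ) : (v ε).im = ε := by simp [v, hc]
  have hv : Tendsto v (𝓝[>] 0) (𝓝 c) :=
    (Continuous.tendsto' (by fun_prop) 0 c (by simp [v])).mono_left nhdsWithin_le_nhds
  have hfv : Tendsto (f ∘ v) (𝓝[>] 0) (𝓝 (f c)) := hd.continuousAt.tendsto.comp hv
  have hlhs : Tendsto (fun ε ↦ z.im * ‖f z - f (v ε)‖ ^ 2) (𝓝[>] 0)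
      (𝓝 (z.im * ‖f z - f c‖ ^ 2)) :=
    ((hfv.const_sub (f z)).norm.pow 2).const_mul _
  have hrhs : Tendsto (fun ε ↦ (f (v ε)).im / ε * (f z).im * ‖z - v ε‖ ^ 2) (𝓝[>] 0)
      (𝓝 (d.re * (f z).im * ‖z - c‖ ^ 2)) :=
    ((tendsto_im_div_of_hasDerivAt hd hfc).mul_const _).mul ((hv.const_sub z).norm.pow 2)
  refine le_of_tendsto_of_tendsto hlhs hrhs ?_
  filter_upwards [self_mem_nhdsWithin] with ε (hε : 0 < ε)
  have hvε : 0 < (v ε).im := by rw [hv_im]; exact hε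
  have h_pick := im_mul_im_mul_norm_sub_map_sq_le hf hmap hz hvε
  rw [hv_im] at h_pick
  rw [div_mul_eq_mul_div, div_mul_eq_mul_div, le_div_iff₀ hε]
  linarith

lemma eq_of_norm_sq_le_im_of_norm_sub_one_sq_le_im {w : ℂ} (h0 : ‖w‖ ^ 2 ≤ w.im)
    (h1 : ‖w - 1‖ ^ 2 ≤ w.im) : w = (1 + I) / 2 := by
  rw [Complex.sq_norm, normSq_apply] at h0 h1
  simp only [sub_re, one_re, sub_im, one_im, sub_zero] at h1
  have hre : w.re = 1 / 2 := by nlinarith [sq_nonneg (2 * w.re - 1), sq_nonneg (2 * w.im - 1)]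
  have him : w.im = 1 / 2 := by nlinarith [sq_nonneg (2 * w.re - 1), sq_nonneg (2 * w.im - 1)]
  apply Complex.ext <;> simp [hre, him]

theorem interior_fixed_point_of_two_boundary_derivatives_one_general
    (U : Set ℂ) (hU : IsOpen U) (hUH : {z : ℂ | 0 < z.im} ⊆ U)
    (h0U : (0 : ℂ) ∈ U) (h1U : (1 : ℂ) ∈ U)
    (f : ℂ → ℂ) (hf : DifferentiableOn ℂ f U)
    (hmap : ∀ z : ℂ, 0 < z.im → 0 < (f z).im)
    (hfix0 : f 0 = 0) (hfix1 : f 1 = 1)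
    (hd0 : deriv f 0 = 1) (hd1 : deriv f 1 = 1) :
    ∃ z : ℂ, 0 < z.im ∧ f z = z := by
  have hderiv {c : ℂ} (hc : c ∈ U) (hdc : deriv f c = 1) : HasDerivAt f 1 c :=
    hdc ▸ (hf.differentiableAt (hU.mem_nhds hc)).hasDerivAt
  set p : ℂ := (1 + I) / 2
  have hp_im : p.im = 1 / 2 := by simp [p]
  have hp : 0 < p.im := by rw [hp_im]; norm_num
  have hp_norm : ‖p‖ ^ 2 = 1 / 2 := by rw [Complex.sq_norm, normSq_apply]; norm_num [p]
  have hp_norm' : ‖p - 1‖ ^ 2 = 1 / 2 := by rw [Complex.sq_norm, normSq_apply]; norm_num [p]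
  have h0 := im_mul_norm_sub_sq_le_of_hasDerivAt (hf.mono hUH) hmap (by simp)
    (by simp [hfix0]) (hderiv h0U hd0) hp
  have h1 := im_mul_norm_sub_sq_le_of_hasDerivAt (hf.mono hUH) hmap (by simp)
    (by simp [hfix1]) (hderiv h1U hd1) hp
  rw [hfix0, sub_zero, sub_zero, hp_im, hp_norm, one_re] at h0
  rw [hfix1, hp_im, hp_norm', one_re] at h1
  exact ⟨p, hp, eq_of_norm_sq_le_im_of_norm_sub_one_sq_le_im (by linarith) (by linarith)⟩

/-- If a nonconstant holomorphic self-map of the half-plane fixes the boundary points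
`0` and `1` with derivative `1` at both, then it has an interior fixed point. -/
theorem interior_fixed_point_of_two_boundary_derivatives_one
    (U : Set ℂ) (hU : IsOpen U) (hUH : {z : ℂ | 0 < z.im} ⊆ U)
    (h0U : (0 : ℂ) ∈ U) (h1U : (1 : ℂ) ∈ U)
    (f : ℂ → ℂ) (hf : DifferentiableOn ℂ f U)
    (hmap : ∀ z : ℂ, 0 < z.im → 0 < (f z).im)
    (hfix0 : f 0 = 0) (hfix1 : f 1 = 1)
    (hnc : ¬ ∃ w : ℂ, ∀ z : ℂ, 0 < z.im → f z = w)
    (hd0 : deriv f 0 = 1) (hd1 : deriv f 1 = 1) :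
    ∃ z : ℂ, 0 < z.im ∧ f z = z :=
  interior_fixed_point_of_two_boundary_derivatives_one_general U hU hUH h0U h1U f hf hmap hfix0
    hfix1 hd0 hd1
end
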